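/- arXiv:2202.04465 — 5 statements merged into one kernel-verified Lean document; each statement's English description precedes it below -/
import Mathlib

section
/- For every instance there exists an allocation π that minimizes the total dissatisfaction Σ_{i∈K} δ_π(i) over all allocations and fulfills the minimality condition: for each agent i ∈ K, no item allocated to agent i is dominated in G_i by a different item allocated to agent i (i.e., there are no two distinct items u, v ∈ π(i) ∩ V_i such that u dominates v in G_i). -/
/-- Item `u` dominates item `v`: `u = v` or there is a directed path from `u` to `v`
along the arcs in `A`. -/
def Dominates {α : Type*} (A : Set (α × α)) (u v : α) : Prop :=
  Relation.ReflTransGen (fun a b => (a, b) ∈ A) u v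

/-- The dissatisfaction of an agent with approved item set `Vi`, arc set `A`,
receiving the set of items `P`. -/
noncomputable def dissat {α : Type*} (Vi : Set α) (A : Set (α × α)) (P : Set α) : ℕ :=
  Set.ncard {v | v ∈ Vi ∧ ¬ ∃ u, u ∈ P ∧ u ∈ Vi ∧ Dominates A u v}

/-- The satisfaction of an agent with approved item set `Vi`, arc set `A`,
receiving the set of items `P`. -/
noncomputable def satis {α : Type*} (Vi : Set α) (A : Set (α × α)) (P : Set α) : ℕ :=
  Set.ncard {v | v ∈ Vi ∧ ∃ u, u ∈ P ∧ u ∈ Vi ∧ Dominates A u v}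

/-- An allocation assigns pairwise disjoint sets of items to the agents. -/
def IsAllocation {ι α : Type*} (π : ι → Set α) : Prop :=
  Pairwise fun i j => Disjoint (π i) (π j)

/-- The arc set is acyclic (directed acyclic graph). -/
def Acyclic {α : Type*} (A : Set (α × α)) : Prop :=
  ∀ v : α, ¬ Relation.TransGen (fun a b => (a, b) ∈ A) v v

lemma dom_antisymm {α : Type*} {A : Set (α × α)} (hA : Acyclic A) {a b : α}
    (h1 : Dominates A a b) (h2 : Dominates A b a) : a = b := by
  rcases Relation.reflTransGen_iff_eq_or_transGen.mp h1 with h | h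
  · exact h.symm
  rcases Relation.reflTransGen_iff_eq_or_transGen.mp h2 with h' | h'
  · exact h'
  exact absurd (h.trans h') (hA a)

lemma exists_maximal_dom {α : Type*} [Fintype α] {A : Set (α × α)} (hA : Acyclic A)
    (S : Set α) :
    ∀ n : ℕ, ∀ u ∈ S, {w ∈ S | Dominates A w u}.ncard ≤ n →
      ∃ m ∈ S, Dominates A m u ∧ ∀ w ∈ S, Dominates A w m → w = m := by
  intro n
  induction n with
  | zero =>
    intro u hu hc
    exfalso
    have hmem : u ∈ {w ∈ S | Dominates A w u} := ⟨hu, Relation.ReflTransGen.refl⟩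
    have := (Set.ncard_pos (Set.toFinite _)).mpr ⟨u, hmem⟩
    omega
  | succ n ih =>
    intro u hu hc
    by_cases h : ∀ w ∈ S, Dominates A w u → w = u
    · exact ⟨u, hu, Relation.ReflTransGen.refl, h⟩
    push_neg at h
    obtain ⟨w, hwS, hwu, hne⟩ := h
    have hsub : {x ∈ S | Dominates A x w} ⊂ {x ∈ S | Dominates A x u} := by
      constructor
      · rintro x ⟨hx, hxw⟩; exact ⟨hx, hxw.trans hwu⟩
      · intro hsub'
        have huw : u ∈ {x ∈ S | Dominates A x w} :=
          hsub' ⟨hu, Relation.ReflTransGen.refl⟩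
        exact hne (dom_antisymm hA hwu huw.2)
    have hlt : {x ∈ S | Dominates A x w}.ncard < {x ∈ S | Dominates A x u}.ncard :=
      Set.ncard_lt_ncard hsub (Set.toFinite _)
    obtain ⟨m, hmS, hmw, hmax⟩ := ih w hwS (by omega)
    exact ⟨m, hmS, hmw.trans hwu, hmax⟩

theorem stmt2 {α ι : Type*} [Fintype α] [Fintype ι]
    (Vi : ι → Set α) (A : ι → Set (α × α))
    (hArcs : ∀ i, ∀ p ∈ A i, p.1 ∈ Vi i ∧ p.2 ∈ Vi i)
    (hAcyc : ∀ i, Acyclic (A i)) :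
    ∃ π : ι → Set α, IsAllocation π ∧
      (∀ π' : ι → Set α, IsAllocation π' →
        ∑ i, dissat (Vi i) (A i) (π i) ≤ ∑ i, dissat (Vi i) (A i) (π' i)) ∧
      (∀ i, ∀ u ∈ π i ∩ Vi i, ∀ v ∈ π i ∩ Vi i, u ≠ v → ¬ Dominates (A i) u v) := by
  classical
  set f : (ι → Set α) → ℕ := fun π => ∑ i, dissat (Vi i) (A i) (π i) with hf
  have hne : {n : ℕ | ∃ π : ι → Set α, IsAllocation π ∧ f π = n}.Nonempty :=
    ⟨f (fun _ => ∅), fun _ => ∅, fun i j _ => by simp, rfl⟩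
  obtain ⟨π, hπalloc, hπn⟩ := Nat.sInf_mem hne
  have hmin : ∀ π' : ι → Set α, IsAllocation π' → f π ≤ f π' := by
    intro π' h'
    rw [hπn]
    exact Nat.sInf_le ⟨π', h', rfl⟩
  set σ : ι → Set α :=
    fun i => {u ∈ π i ∩ Vi i | ∀ w ∈ π i ∩ Vi i, Dominates (A i) w u → w = u} with hσ
  have hσsub : ∀ i, σ i ⊆ π i := fun i u hu => hu.1.1
  have hσVi : ∀ i, σ i ⊆ Vi i := fun i u hu => hu.1.2
  have halloc : IsAllocation σ := fun i j hij =>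
    (hπalloc hij).mono (hσsub i) (hσsub j)
  have hdis : ∀ i, dissat (Vi i) (A i) (σ i) = dissat (Vi i) (A i) (π i) := by
    intro i
    unfold dissat
    congr 1
    ext v
    simp only [Set.mem_setOf_eq]
    constructor
    · rintro ⟨hv, hnd⟩
      refine ⟨hv, ?_⟩
      rintro ⟨u, huπ, huV, hdom⟩
      obtain ⟨m, hmS, hmu, hmax⟩ :=
        exists_maximal_dom (hAcyc i) (π i ∩ Vi i)
          ({w ∈ π i ∩ Vi i | Dominates (A i) w u}.ncard) u ⟨huπ, huV⟩ le_rfl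
      exact hnd ⟨m, ⟨hmS, hmax⟩, hmS.2, hmu.trans hdom⟩
    · rintro ⟨hv, hnd⟩
      exact ⟨hv, fun ⟨u, huσ, huV, hdom⟩ => hnd ⟨u, hσsub i huσ, huV, hdom⟩⟩
  refine ⟨σ, halloc, ?_, ?_⟩
  · intro π' h'
    have : f σ = f π := by
      simp only [hf]
      exact Finset.sum_congr rfl fun i _ => hdis i
    calc ∑ i, dissat (Vi i) (A i) (σ i) = f π := this
      _ ≤ f π' := hmin π' h'
  · rintro i u ⟨huσ, huV⟩ v ⟨hvσ, hvV⟩ hne hdom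
    exact hne (hvσ.2 u ⟨hσsub i huσ, huV⟩ hdom)
end

section
/- Suppose each preference graph G_i = (V_i, A_i) is a directed matching, i.e., every vertex of V_i has degree exactly one in G_i. Define an undirected bipartite graph H with vertex set X ∪ Y ∪ Z, where X = {x_j^i : i ∈ K, j ∈ V_i}, Y = {y_a^i : i ∈ K, a ∈ A_i}, Z = {z_j : j ∈ V}, and edge set S ∪ T, where S = {{x_j^i, z_j} : i ∈ K, j ∈ V_i} and T contains, for each i ∈ K and arc (a, a') ∈ A_i, the edges {y_{(a,a')}^i, x_a^i} and {y_{(a,a')}^i, x_{a'}^i}. Assign weights: w({x_j^i, z_j}) = 1 if j is the head of an arc of A_i, w({x_j^i, z_j}) = 2 if j is the tail of an arc of A_i, and w(e) = 2|V| for every e ∈ T. Then the maximum total satisfaction over all allocations equals W − 2|V| · Σ_{i∈K} |A_i|, where W is the maximum weight of a matching in H; equivalently, the minimum total dissatisfaction over all allocations equals Σ_{i∈K} |V_i| + 2|V| · Σ_{i∈K} |A_i| − W. -/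
/-- Vertices of the auxiliary bipartite graph `H`: copies `x_j^i` (left),
arc-vertices `y_a^i` (middle), and item vertices `z_j` (right). -/
abbrev MVert (ι α : Type*) : Type _ := (ι × α) ⊕ (ι × (α × α)) ⊕ α

/-- Base relation for the auxiliary graph `H`. -/
def mrel {ι α : Type*} (Vi : ι → Set α) (Ai : ι → Set (α × α)) :
    MVert ι α → MVert ι α → Prop :=
  fun x y =>
    match x, y with
    | .inl (i, j), .inr (.inr z) => j ∈ Vi i ∧ j = z
    | .inl (i, j), .inr (.inl (i', a)) => i = i' ∧ a ∈ Ai i ∧ (a.1 = j ∨ a.2 = j)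
    | _, _ => False

-- Edge weights (given as a symmetric function on ordered pairs): an edge between `x_j^i`
-- and `z_j` has weight 1 if `j` is the head of an arc of `A_i` and 2 if it is a tail;
-- edges incident with arc-vertices have weight `2|V|`.
open scoped Classical in
noncomputable def ew {ι α : Type*} (Ai : ι → Set (α × α)) (nV : ℕ) :
    MVert ι α → MVert ι α → ℕ :=
  fun x y =>
    match x, y with
    | .inl (i, j), .inr (.inr _) => if ∃ a ∈ Ai i, a.2 = j then 1 else 2
    | .inr (.inr _), .inl (i, j) => if ∃ a ∈ Ai i, a.2 = j then 1 else 2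
    | .inl _, .inr (.inl _) => 2 * nV
    | .inr (.inl _), .inl _ => 2 * nV
    | _, _ => 0

/-- `M` is a matching in `H`: a set of edges of `H` that pairwise share no endpoint. -/
def IsMatchingIn {τ : Type*} (H : SimpleGraph τ) (M : Finset (τ × τ)) : Prop :=
  (∀ p ∈ M, H.Adj p.1 p.2) ∧
  ∀ p ∈ M, ∀ q ∈ M, p ≠ q →
    p.1 ≠ q.1 ∧ p.1 ≠ q.2 ∧ p.2 ≠ q.1 ∧ p.2 ≠ q.2

open scoped Classical
set_option linter.unusedSectionVars false
set_option linter.unreachableTactic false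
set_option linter.unusedTactic false

section Aux

variable {α ι : Type*} [Fintype α] [Fintype ι]
  (Vi : ι → Set α) (Ai : ι → Set (α × α))

variable {Vi Ai}

section Basic

variable (hArcs : ∀ i, ∀ p ∈ Ai i, p.1 ∈ Vi i ∧ p.2 ∈ Vi i)
  (hAcyc : ∀ i, Acyclic (Ai i))
  (hMatch : ∀ i, ∀ v ∈ Vi i, ∃! a : α × α, a ∈ Ai i ∧ (a.1 = v ∨ a.2 = v))

include hAcyc in
lemma no_loop (i : ι) (v : α) : (v, v) ∉ Ai i := fun h =>
  hAcyc i v (Relation.TransGen.single h)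

include hAcyc in
lemma arc_ne {i : ι} {p : α × α} (hp : p ∈ Ai i) : p.1 ≠ p.2 := by
  intro h
  have : (p.1, p.2) ∈ Ai i := by simpa using hp
  rw [h] at this
  exact no_loop hAcyc i p.2 this

include hMatch in
lemma arc_uniq {i : ι} {v : α} (hv : v ∈ Vi i) {p q : α × α}
    (hp : p ∈ Ai i) (hq : q ∈ Ai i) (hpv : p.1 = v ∨ p.2 = v)
    (hqv : q.1 = v ∨ q.2 = v) : p = q := by
  obtain ⟨a, _, ha⟩ := hMatch i v hv
  rw [ha p ⟨hp, hpv⟩, ha q ⟨hq, hqv⟩]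

include hArcs hAcyc hMatch in
lemma dom_iff {i : ι} (u v : α) :
    Dominates (Ai i) u v ↔ u = v ∨ (u, v) ∈ Ai i := by
  constructor
  · intro h
    induction h with
    | refl => exact Or.inl rfl
    | @tail w x hw hx ih =>
      rcases ih with rfl | huw
      · exact Or.inr hx
      · exfalso
        have hwv : w ∈ Vi i := (hArcs i _ huw).2
        have heq : (u, w) = (w, x) :=
          arc_uniq hMatch hwv huw hx (Or.inr rfl) (Or.inl rfl)
        have h1 : u = w := congrArg Prod.fst heq
        have h2 : w = x := congrArg Prod.snd heq
        subst h1 h2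
        exact no_loop hAcyc i u huw
  · rintro (rfl | h)
    · exact Relation.ReflTransGen.refl
    · exact Relation.ReflTransGen.single h

include hAcyc hMatch in
lemma not_head_of_tail {i : ι} {p : α × α} (hv : p.1 ∈ Vi i) (hp : p ∈ Ai i) :
    ¬ ∃ a ∈ Ai i, a.2 = p.1 := by
  rintro ⟨a, ha, ha2⟩
  have h := arc_uniq hMatch hv ha hp (Or.inr ha2) (Or.inl rfl)
  subst h
  exact arc_ne hAcyc ha ha2.symm

end Basic

/-- the finite set of arcs of agent `i`. -/
noncomputable def AF (Ai : ι → Set (α × α)) (i : ι) : Finset (α × α) :=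
  (Ai i).toFinite.toFinset

lemma mem_AF {i : ι} {p : α × α} : p ∈ AF Ai i ↔ p ∈ Ai i :=
  (Ai i).toFinite.mem_toFinset

lemma card_AF (i : ι) : (AF Ai i).card = (Ai i).ncard :=
  (Set.ncard_eq_toFinset_card (Ai i) (Ai i).toFinite).symm

/-- value contributed by an arc under item set `P`. -/
noncomputable def arcval (P : Set α) (p : α × α) : ℕ :=
  if p.1 ∈ P then 2 else if p.2 ∈ P then 1 else 0

lemma arcval_le_two (P : Set α) (p : α × α) : arcval P p ≤ 2 := by
  unfold arcval; split_ifs <;> omega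

end Aux
section Aux2

variable {α ι : Type*} [Fintype α] [Fintype ι]
  {Vi : ι → Set α} {Ai : ι → Set (α × α)}

variable (hArcs : ∀ i, ∀ p ∈ Ai i, p.1 ∈ Vi i ∧ p.2 ∈ Vi i)
  (hAcyc : ∀ i, Acyclic (Ai i))
  (hMatch : ∀ i, ∀ v ∈ Vi i, ∃! a : α × α, a ∈ Ai i ∧ (a.1 = v ∨ a.2 = v))

/-- satisfied vertices of an arc. -/
noncomputable def satArc (P : Set α) (p : α × α) : Finset α :=
  if p.1 ∈ P then {p.1, p.2} else if p.2 ∈ P then {p.2} else ∅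

lemma mem_satArc {P : Set α} {p : α × α} {v : α} :
    v ∈ satArc P p ↔
      (p.1 ∈ P ∧ (v = p.1 ∨ v = p.2)) ∨ (p.1 ∉ P ∧ p.2 ∈ P ∧ v = p.2) := by
  unfold satArc; split_ifs with h1 h2 <;> simp [h1] <;> tauto

lemma mem_satArc_ends {P : Set α} {p : α × α} {v : α} (h : v ∈ satArc P p) :
    v = p.1 ∨ v = p.2 := by
  rcases mem_satArc.1 h with ⟨_, h⟩ | ⟨_, _, h⟩ <;> tauto

lemma card_satArc {P : Set α} {p : α × α} (hne : p.1 ≠ p.2) :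
    (satArc P p).card = arcval P p := by
  unfold satArc arcval
  split_ifs with h1 h2 <;> simp [Finset.card_pair hne]

include hArcs hAcyc hMatch in
lemma satis_eq_sum (i : ι) (P : Set α) :
    satis (Vi i) (Ai i) P = ∑ p ∈ AF Ai i, arcval P p := by
  have hset : {v | v ∈ Vi i ∧ ∃ u, u ∈ P ∧ u ∈ Vi i ∧ Dominates (Ai i) u v}
      = ↑((AF Ai i).biUnion (satArc P)) := by
    ext v
    simp only [Set.mem_setOf_eq, Finset.coe_biUnion, Set.mem_iUnion, Finset.mem_coe,
      mem_AF]
    constructor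
    · rintro ⟨hv, u, hu, huV, hdom⟩
      rcases (dom_iff hArcs hAcyc hMatch u v).1 hdom with rfl | hA
      · obtain ⟨p, ⟨hp, hpv⟩, -⟩ := hMatch i u hv
        refine ⟨p, hp, mem_satArc.2 ?_⟩
        rcases hpv with h1 | h2
        · exact Or.inl ⟨h1 ▸ hu, Or.inl h1.symm⟩
        · by_cases hp1 : p.1 ∈ P
          · exact Or.inl ⟨hp1, Or.inr h2.symm⟩
          · exact Or.inr ⟨hp1, h2 ▸ hu, h2.symm⟩
      · refine ⟨(u, v), hA, mem_satArc.2 (Or.inl ⟨hu, Or.inr rfl⟩)⟩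
    · rintro ⟨p, hp, hsat⟩
      have hVi := hArcs i p hp
      have hpp : (p.1, p.2) ∈ Ai i := by simpa using hp
      rcases mem_satArc.1 hsat with ⟨h1, rfl | rfl⟩ | ⟨h1, h2, rfl⟩
      · exact ⟨hVi.1, p.1, h1, hVi.1, Relation.ReflTransGen.refl⟩
      · exact ⟨hVi.2, p.1, h1, hVi.1, Relation.ReflTransGen.single hpp⟩
      · exact ⟨hVi.2, p.2, h2, hVi.2, Relation.ReflTransGen.refl⟩
  rw [satis, hset, Set.ncard_coe_finset]
  rw [Finset.card_biUnion]
  · exact Finset.sum_congr rfl fun p hp =>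
      card_satArc (arc_ne hAcyc (mem_AF.1 hp))
  · intro p hp q hq hne
    rw [Function.onFun, Finset.disjoint_left]
    intro v hvp hvq
    have hvV : v ∈ Vi i := by
      rcases mem_satArc_ends hvp with rfl | rfl
      exacts [(hArcs i p (mem_AF.1 hp)).1, (hArcs i p (mem_AF.1 hp)).2]
    exact hne (arc_uniq hMatch hvV (mem_AF.1 hp) (mem_AF.1 hq)
      (by rcases mem_satArc_ends hvp with h | h <;> [exact Or.inl h.symm; exact Or.inr h.symm])
      (by rcases mem_satArc_ends hvq with h | h <;> [exact Or.inl h.symm; exact Or.inr h.symm]))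

lemma satis_add_dissat (i : ι) (P : Set α) :
    satis (Vi i) (Ai i) P + dissat (Vi i) (Ai i) P = (Vi i).ncard := by
  rw [satis, dissat]
  rw [← Set.ncard_union_eq ?_ (Set.toFinite _) (Set.toFinite _)]
  · congr 1
    ext v
    constructor
    · rintro (⟨h, _⟩ | ⟨h, _⟩) <;> exact h
    · intro hv
      by_cases h : ∃ u, u ∈ P ∧ u ∈ Vi i ∧ Dominates (Ai i) u v
      · exact Or.inl ⟨hv, h⟩
      · exact Or.inr ⟨hv, h⟩
  · rw [Set.disjoint_left]
    rintro v ⟨_, h⟩ ⟨_, h'⟩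
    exact h' h

lemma satis_le_ncard (i : ι) (P : Set α) :
    satis (Vi i) (Ai i) P ≤ (Vi i).ncard := by
  rw [← satis_add_dissat (Ai := Ai) i P]; omega

end Aux2
section Graph

variable {α ι : Type*} [Fintype α] [Fintype ι]
  {Vi : ι → Set α} {Ai : ι → Set (α × α)}

/-- the `x`-vertices. -/
abbrev vX (i : ι) (j : α) : MVert ι α := Sum.inl (i, j)
/-- the `y`-vertices. -/
abbrev vY (i : ι) (p : α × α) : MVert ι α := Sum.inr (Sum.inl (i, p))
/-- the `z`-vertices. -/
abbrev vZ (ι : Type*) {α : Type*} (j : α) : MVert ι α := Sum.inr (Sum.inr j)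

lemma ew_xz_head (n : ℕ) {i : ι} {j : α} (z : α) (h : ∃ a ∈ Ai i, a.2 = j) :
    ew Ai n (vX i j) (vZ ι z) = 1 := by simp [ew, h]

lemma ew_xz_tail (n : ℕ) {i : ι} {j : α} (z : α) (h : ¬ ∃ a ∈ Ai i, a.2 = j) :
    ew Ai n (vX i j) (vZ ι z) = 2 := by simp [ew, h]

lemma ew_zx_head (n : ℕ) {i : ι} {j : α} (z : α) (h : ∃ a ∈ Ai i, a.2 = j) :
    ew Ai n (vZ ι z) (vX i j) = 1 := by simp [ew, h]

lemma ew_zx_tail (n : ℕ) {i : ι} {j : α} (z : α) (h : ¬ ∃ a ∈ Ai i, a.2 = j) :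
    ew Ai n (vZ ι z) (vX i j) = 2 := by simp [ew, h]

lemma ew_xz_le (n : ℕ) (i : ι) (j z : α) :
    ew Ai n (vX i j) (vZ ι z) ≤ 2 := by
  by_cases h : ∃ a ∈ Ai i, a.2 = j
  · rw [ew_xz_head n z h]; omega
  · rw [ew_xz_tail n z h]

lemma ew_zx_le (n : ℕ) (i : ι) (j z : α) :
    ew Ai n (vZ ι z) (vX i j) ≤ 2 := by
  by_cases h : ∃ a ∈ Ai i, a.2 = j
  · rw [ew_zx_head n z h]; omega
  · rw [ew_zx_tail n z h]

lemma ew_xy (n : ℕ) (i i' : ι) (j : α) (p : α × α) :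
    ew Ai n (vX i j) (vY i' p) = 2 * n := rfl

lemma ew_yx (n : ℕ) (i i' : ι) (j : α) (p : α × α) :
    ew Ai n (vY i' p) (vX i j) = 2 * n := rfl

lemma adj_classify {u v : MVert ι α}
    (h : (SimpleGraph.fromRel (mrel Vi Ai)).Adj u v) :
    (∃ i j, j ∈ Vi i ∧ ((u, v) = (vX i j, vZ ι j) ∨ (u, v) = (vZ ι j, vX i j))) ∨
    (∃ i p j, p ∈ Ai i ∧ (p.1 = j ∨ p.2 = j) ∧
      ((u, v) = (vX i j, vY i p) ∨ (u, v) = (vY i p, vX i j))) := by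
  rw [SimpleGraph.fromRel_adj] at h
  obtain ⟨hne, h | h⟩ := h
  · rcases u with ⟨i, j⟩ | ⟨⟨i, p⟩ | j⟩ <;> rcases v with ⟨i', j'⟩ | ⟨⟨i', p'⟩ | j'⟩ <;>
      simp only [mrel] at h
    · obtain ⟨rfl, hp, hj⟩ := h
      exact Or.inr ⟨i, p', j, hp, hj, Or.inl rfl⟩
    · obtain ⟨hV, rfl⟩ := h
      exact Or.inl ⟨i, j, hV, Or.inl rfl⟩
  · rcases u with ⟨i, j⟩ | ⟨⟨i, p⟩ | j⟩ <;> rcases v with ⟨i', j'⟩ | ⟨⟨i', p'⟩ | j'⟩ <;>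
      simp only [mrel] at h
    · obtain ⟨rfl, hp, hj⟩ := h
      exact Or.inr ⟨i', p, j', hp, hj, Or.inr rfl⟩
    · obtain ⟨hV, rfl⟩ := h
      exact Or.inl ⟨i', j', hV, Or.inr rfl⟩

lemma matching_shared {τ : Type*} {H : SimpleGraph τ} {M : Finset (τ × τ)}
    (hM : IsMatchingIn H M) {e f : τ × τ} (he : e ∈ M) (hf : f ∈ M)
    {x : τ} (hx : x = e.1 ∨ x = e.2) (hx' : x = f.1 ∨ x = f.2) : e = f := by
  by_contra hne
  obtain ⟨h1, h2, h3, h4⟩ := hM.2 e he f hf hne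
  rcases hx with rfl | rfl <;> rcases hx' with h | h <;> simp_all

variable (Ai) in
/-- index set of all pairs (agent, arc). -/
noncomputable def TA : Finset (ι × (α × α)) :=
  Finset.univ.biUnion fun i => (AF Ai i).image (fun p => (i, p))

lemma mem_TA {ip : ι × (α × α)} : ip ∈ TA Ai ↔ ip.2 ∈ Ai ip.1 := by
  rcases ip with ⟨i, p⟩
  constructor
  · intro h
    simp only [TA, Finset.mem_biUnion, Finset.mem_image] at h
    obtain ⟨i', _, p', hp', heq⟩ := h
    obtain ⟨rfl, rfl⟩ : i' = i ∧ p' = p := by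
      constructor <;> [exact congrArg Prod.fst heq; exact congrArg Prod.snd heq]
    exact mem_AF.1 hp'
  · intro h
    simp only [TA, Finset.mem_biUnion, Finset.mem_image]
    exact ⟨i, Finset.mem_univ i, p, mem_AF.2 h, rfl⟩

lemma sum_TA (g : ι × (α × α) → ℕ) :
    ∑ ip ∈ TA Ai, g ip = ∑ i, ∑ p ∈ AF Ai i, g (i, p) := by
  rw [TA, Finset.sum_biUnion]
  · refine Finset.sum_congr rfl fun i _ => ?_
    rw [Finset.sum_image]
    intro a _ b _ hab
    exact congrArg Prod.snd hab
  · intro i _ i' _ hne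
    rw [Function.onFun, Finset.disjoint_left]
    rintro ⟨a, b⟩ ha hb
    simp only [Finset.mem_image] at ha hb
    obtain ⟨_, _, heq⟩ := ha
    obtain ⟨_, _, heq'⟩ := hb
    exact hne ((congrArg Prod.fst heq).trans (congrArg Prod.fst heq').symm)

lemma card_TA : (TA Ai).card = ∑ i, (Ai i).ncard := by
  rw [Finset.card_eq_sum_ones, sum_TA (fun _ => 1)]
  exact Finset.sum_congr rfl fun i _ => by
    rw [← Finset.card_eq_sum_ones, card_AF]

end Graph
section Construct

variable {α ι : Type*} [Fintype α] [Fintype ι]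
  {Vi : ι → Set α} {Ai : ι → Set (α × α)}

variable (hArcs : ∀ i, ∀ p ∈ Ai i, p.1 ∈ Vi i ∧ p.2 ∈ Vi i)
  (hAcyc : ∀ i, Acyclic (Ai i))
  (hMatch : ∀ i, ∀ v ∈ Vi i, ∃! a : α × α, a ∈ Ai i ∧ (a.1 = v ∨ a.2 = v))

/-- an `x`–`z` edge. -/
abbrev ezE (i : ι) (j : α) : MVert ι α × MVert ι α := (vX i j, vZ ι j)
/-- an `x`–`y` edge. -/
abbrev eyE (i : ι) (p : α × α) (j : α) : MVert ι α × MVert ι α := (vX i j, vY i p)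

/-- the (at most two) matching edges associated to arc `p` of agent `i`,
given allocation `π`. -/
noncomputable def marc (π : ι → Set α) (i : ι) (p : α × α) :
    Finset (MVert ι α × MVert ι α) :=
  if p.1 ∈ π i then {ezE i p.1, eyE i p p.2}
  else if p.2 ∈ π i then {ezE i p.2, eyE i p p.1}
  else {eyE i p p.1}

lemma mem_marc {π : ι → Set α} {i : ι} {p : α × α} {e : MVert ι α × MVert ι α} :
    e ∈ marc π i p ↔
      (p.1 ∈ π i ∧ (e = ezE i p.1 ∨ e = eyE i p p.2)) ∨
      (p.1 ∉ π i ∧ p.2 ∈ π i ∧ (e = ezE i p.2 ∨ e = eyE i p p.1)) ∨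
      (p.1 ∉ π i ∧ p.2 ∉ π i ∧ e = eyE i p p.1) := by
  unfold marc
  split_ifs with h1 h2 <;>
    simp only [Finset.mem_insert, Finset.mem_singleton] <;> tauto

lemma marc_fst {π : ι → Set α} {i : ι} {p : α × α} {e : MVert ι α × MVert ι α}
    (he : e ∈ marc π i p) : ∃ j, (j = p.1 ∨ j = p.2) ∧ e.1 = vX i j := by
  rcases mem_marc.1 he with ⟨_, rfl | rfl⟩ | ⟨_, _, rfl | rfl⟩ | ⟨_, _, rfl⟩ <;>
    [exact ⟨p.1, Or.inl rfl, rfl⟩; exact ⟨p.2, Or.inr rfl, rfl⟩;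
     exact ⟨p.2, Or.inr rfl, rfl⟩; exact ⟨p.1, Or.inl rfl, rfl⟩;
     exact ⟨p.1, Or.inl rfl, rfl⟩]

lemma marc_x_end {π : ι → Set α} {i : ι} {p : α × α} {e : MVert ι α × MVert ι α}
    (he : e ∈ marc π i p) {i0 : ι} {j0 : α}
    (hx : vX i0 j0 = e.1 ∨ vX i0 j0 = e.2) : i0 = i ∧ (j0 = p.1 ∨ j0 = p.2) := by
  rcases mem_marc.1 he with ⟨_, rfl | rfl⟩ | ⟨_, _, rfl | rfl⟩ | ⟨_, _, rfl⟩ <;>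
    rcases hx with h | h <;> simp_all

lemma marc_z_end {π : ι → Set α} {i : ι} {p : α × α} {e : MVert ι α × MVert ι α}
    (he : e ∈ marc π i p) {j0 : α}
    (hz : vZ ι j0 = e.1 ∨ vZ ι j0 = e.2) : j0 ∈ π i ∧ e = ezE i j0 := by
  rcases mem_marc.1 he with ⟨h1, rfl | rfl⟩ | ⟨h1, h2, rfl | rfl⟩ | ⟨h1, h2, rfl⟩ <;>
    rcases hz with h | h <;> simp_all

lemma marc_y_end {π : ι → Set α} {i : ι} {p : α × α} {e : MVert ι α × MVert ι α}
    (he : e ∈ marc π i p) {i0 : ι} {p0 : α × α}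
    (hy : vY i0 p0 = e.1 ∨ vY i0 p0 = e.2) :
    i0 = i ∧ p0 = p ∧ e = eyE i p (if p.1 ∈ π i then p.2 else p.1) := by
  rcases mem_marc.1 he with ⟨h1, rfl | rfl⟩ | ⟨h1, h2, rfl | rfl⟩ | ⟨h1, h2, rfl⟩ <;>
    rcases hy with h | h <;> simp_all

lemma marc_x_uniq {π : ι → Set α} {i : ι} {p : α × α} (hne : p.1 ≠ p.2)
    {e f : MVert ι α × MVert ι α}
    (he : e ∈ marc π i p) (hf : f ∈ marc π i p) {i0 : ι} {j0 : α}
    (hxe : vX i0 j0 = e.1 ∨ vX i0 j0 = e.2)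
    (hxf : vX i0 j0 = f.1 ∨ vX i0 j0 = f.2) : e = f := by
  unfold marc at he hf
  split_ifs at he hf with h1 h2 <;>
    simp only [Finset.mem_insert, Finset.mem_singleton] at he hf <;>
    rcases he with rfl | rfl <;> rcases hf with rfl | rfl <;>
    rcases hxe with h | h <;> rcases hxf with h' | h' <;> simp_all

end Construct
section Construct2

variable {α ι : Type*} [Fintype α] [Fintype ι]
  {Vi : ι → Set α} {Ai : ι → Set (α × α)}

variable (hArcs : ∀ i, ∀ p ∈ Ai i, p.1 ∈ Vi i ∧ p.2 ∈ Vi i)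
  (hAcyc : ∀ i, Acyclic (Ai i))
  (hMatch : ∀ i, ∀ v ∈ Vi i, ∃! a : α × α, a ∈ Ai i ∧ (a.1 = v ∨ a.2 = v))

variable (Ai) in
/-- the matching associated to an allocation. -/
noncomputable def MA (π : ι → Set α) : Finset (MVert ι α × MVert ι α) :=
  (TA Ai).biUnion fun ip => marc π ip.1 ip.2

lemma mem_MA {π : ι → Set α} {e : MVert ι α × MVert ι α} :
    e ∈ MA Ai π ↔ ∃ i p, p ∈ Ai i ∧ e ∈ marc π i p := by
  unfold MA
  simp only [Finset.mem_biUnion]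
  constructor
  · rintro ⟨⟨i, p⟩, hip, he⟩
    exact ⟨i, p, mem_TA.1 hip, he⟩
  · rintro ⟨i, p, hp, he⟩
    exact ⟨(i, p), mem_TA.2 hp, he⟩

include hArcs hAcyc hMatch in
lemma MA_isMatching {π : ι → Set α} (hπ : IsAllocation π) :
    IsMatchingIn (SimpleGraph.fromRel (mrel Vi Ai)) (MA Ai π) := by
  constructor
  · rintro e he
    obtain ⟨i, p, hp, he⟩ := mem_MA.1 he
    have hV := hArcs i p hp
    rw [SimpleGraph.fromRel_adj]
    rcases mem_marc.1 he with ⟨_, rfl | rfl⟩ | ⟨_, _, rfl | rfl⟩ | ⟨_, _, rfl⟩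
    · exact ⟨by simp, Or.inl ⟨hV.1, rfl⟩⟩
    · exact ⟨by simp, Or.inl ⟨rfl, hp, Or.inr rfl⟩⟩
    · exact ⟨by simp, Or.inl ⟨hV.2, rfl⟩⟩
    · exact ⟨by simp, Or.inl ⟨rfl, hp, Or.inl rfl⟩⟩
    · exact ⟨by simp, Or.inl ⟨rfl, hp, Or.inl rfl⟩⟩
  · intro e he f hf hef
    obtain ⟨i, p, hp, he⟩ := mem_MA.1 he
    obtain ⟨i', p', hp', hf⟩ := mem_MA.1 hf
    have noshare : ∀ x : MVert ι α, (x = e.1 ∨ x = e.2) → (x = f.1 ∨ x = f.2) → False := by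
      intro x hxe hxf
      rcases x with ⟨i0, j0⟩ | ⟨⟨i0, p0⟩ | j0⟩
      · -- shared x-vertex
        obtain ⟨hie, hje⟩ := marc_x_end he (by exact hxe)
        obtain ⟨hif, hjf⟩ := marc_x_end hf (by exact hxf)
        subst hie
        have hii : i0 = i' := hif
        subst hii
        have hj0V : j0 ∈ Vi i0 := by
          rcases hje with rfl | rfl
          exacts [(hArcs i0 p hp).1, (hArcs i0 p hp).2]
        have hpp : p = p' := arc_uniq hMatch hj0V hp hp'
          (by tauto) (by tauto)
        subst hpp
        exact hef (marc_x_uniq (arc_ne hAcyc hp) he hf hxe hxf)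
      · -- shared y-vertex
        obtain ⟨hie, hpe, he'⟩ := marc_y_end he (by exact hxe)
        obtain ⟨hif, hpf, hf'⟩ := marc_y_end hf (by exact hxf)
        subst hie; subst hpe
        rw [← hif] at hf'
        rw [← hpf] at hf'
        exact hef (he'.trans hf'.symm)
      · -- shared z-vertex
        obtain ⟨hze, he'⟩ := marc_z_end he (by exact hxe)
        obtain ⟨hzf, hf'⟩ := marc_z_end hf (by exact hxf)
        have hii : i = i' := by
          by_contra hne
          exact (hπ hne).ne_of_mem hze hzf rfl
        subst hii
        exact hef (he'.trans hf'.symm)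
    refine ⟨?_, ?_, ?_, ?_⟩ <;> intro h
    · exact noshare e.1 (Or.inl rfl) (Or.inl h)
    · exact noshare e.1 (Or.inl rfl) (Or.inr h)
    · exact noshare e.2 (Or.inr rfl) (Or.inl h)
    · exact noshare e.2 (Or.inr rfl) (Or.inr h)

include hArcs hAcyc hMatch in
lemma sum_marc (n : ℕ) {π : ι → Set α} {i : ι} {p : α × α} (hp : p ∈ Ai i) :
    ∑ e ∈ marc π i p, ew Ai n e.1 e.2 = arcval (π i) p + 2 * n := by
  have hne := arc_ne hAcyc hp
  have hnothead : ¬ ∃ a ∈ Ai i, a.2 = p.1 :=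
    not_head_of_tail hAcyc hMatch (hArcs i p hp).1 hp
  have hhead : ∃ a ∈ Ai i, a.2 = p.2 := ⟨p, hp, rfl⟩
  unfold marc arcval
  split_ifs with h1 h2
  · rw [Finset.sum_pair (by simp)]
    show ew Ai n (vX i p.1) (vZ ι p.1) + ew Ai n (vX i p.2) (vY i p) = 2 + 2 * n
    rw [ew_xz_tail n p.1 hnothead, ew_xy]
  · rw [Finset.sum_pair (by simp)]
    show ew Ai n (vX i p.2) (vZ ι p.2) + ew Ai n (vX i p.1) (vY i p) = 1 + 2 * n
    rw [ew_xz_head n p.2 hhead, ew_xy]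
  · rw [Finset.sum_singleton]
    show ew Ai n (vX i p.1) (vY i p) = 0 + 2 * n
    rw [ew_xy]; omega

include hArcs hAcyc hMatch in
lemma sum_MA (n : ℕ) {π : ι → Set α} :
    ∑ e ∈ MA Ai π, ew Ai n e.1 e.2
      = (∑ i, satis (Vi i) (Ai i) (π i)) + 2 * n * ∑ i, (Ai i).ncard := by
  unfold MA
  rw [Finset.sum_biUnion]
  · have : ∀ ip ∈ TA Ai, ∑ e ∈ marc π ip.1 ip.2, ew Ai n e.1 e.2
        = arcval (π ip.1) ip.2 + 2 * n := fun ip hip =>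
      sum_marc hArcs hAcyc hMatch n (mem_TA.1 hip)
    rw [Finset.sum_congr rfl this, Finset.sum_add_distrib, Finset.sum_const, card_TA]
    have h1 : ∑ ip ∈ TA Ai, arcval (π ip.1) ip.2 = ∑ i, ∑ p ∈ AF Ai i, arcval (π i) p :=
      sum_TA _
    rw [h1]
    have h2 : ∀ i ∈ (Finset.univ : Finset ι), ∑ p ∈ AF Ai i, arcval (π i) p
        = satis (Vi i) (Ai i) (π i) := fun i _ =>
      (satis_eq_sum hArcs hAcyc hMatch i (π i)).symm
    rw [Finset.sum_congr rfl h2, smul_eq_mul, mul_comm]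
  · intro ip hip ip' hip' hne
    rw [Function.onFun, Finset.disjoint_left]
    intro e he hf
    obtain ⟨j, hj, h1⟩ := marc_fst he
    obtain ⟨j', hj', h1'⟩ := marc_fst hf
    rw [h1] at h1'
    have hii : ip.1 = ip'.1 := by
      have := h1'
      simp only [vX, Sum.inl.injEq, Prod.mk.injEq] at this
      exact this.1
    have hjj : j = j' := by
      simp only [vX, Sum.inl.injEq, Prod.mk.injEq] at h1'
      exact h1'.2
    subst hjj
    have hp : ip.2 ∈ Ai ip.1 := mem_TA.1 hip
    have hp' : ip'.2 ∈ Ai ip'.1 := mem_TA.1 hip'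
    rw [← hii] at hp'
    have hjV : j ∈ Vi ip.1 := by
      rcases hj with rfl | rfl
      exacts [(hArcs _ _ hp).1, (hArcs _ _ hp).2]
    have hpp : ip.2 = ip'.2 := arc_uniq hMatch hjV hp hp' (by tauto) (by tauto)
    exact hne (Prod.ext hii hpp)

end Construct2
section Bound

variable {α ι : Type*} [Fintype α] [Fintype ι]
  {Vi : ι → Set α} {Ai : ι → Set (α × α)}

/-- extract the `y`-index of a vertex. -/
def yIdx : MVert ι α → Option (ι × (α × α))
  | .inr (.inl ip) => some ip
  | _ => none

/-- extract the `z`-index of a vertex. -/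
def zIdx : MVert ι α → Option α
  | .inr (.inr j) => some j
  | _ => none

/-- extract the `x`-index of a vertex. -/
def xIdx : MVert ι α → Option (ι × α)
  | .inl ij => some ij
  | _ => none

/-- the `y`-index of an edge. -/
def fy (e : MVert ι α × MVert ι α) : Option (ι × (α × α)) := (yIdx e.1).or (yIdx e.2)
/-- the `z`-index of an edge. -/
def fz (e : MVert ι α × MVert ι α) : Option α := (zIdx e.1).or (zIdx e.2)
/-- the `x`-index of an edge. -/
def fx (e : MVert ι α × MVert ι α) : Option (ι × α) := (xIdx e.1).or (xIdx e.2)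

lemma fy_xy (i i' : ι) (j : α) (p : α × α) : fy (vX i j, vY i' p) = some (i', p) := rfl
lemma fy_yx (i i' : ι) (j : α) (p : α × α) : fy (vY i' p, vX i j) = some (i', p) := rfl
lemma fy_xz (i : ι) (j z : α) : fy ((vX i j : MVert ι α), vZ ι z) = none := rfl
lemma fy_zx (i : ι) (j z : α) : fy ((vZ ι z : MVert ι α), vX i j) = none := rfl
lemma fz_xy (i i' : ι) (j : α) (p : α × α) : fz (vX i j, vY i' p) = none := rfl
lemma fz_yx (i i' : ι) (j : α) (p : α × α) : fz (vY i' p, vX i j) = none := rfl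
lemma fz_xz (i : ι) (j z : α) : fz ((vX i j : MVert ι α), vZ ι z) = some z := rfl
lemma fz_zx (i : ι) (j z : α) : fz ((vZ ι z : MVert ι α), vX i j) = some z := rfl
lemma fx_xy (i i' : ι) (j : α) (p : α × α) : fx (vX i j, vY i' p) = some (i, j) := rfl
lemma fx_yx (i i' : ι) (j : α) (p : α × α) : fx (vY i' p, vX i j) = some (i, j) := rfl
lemma fx_xz (i : ι) (j z : α) : fx ((vX i j : MVert ι α), vZ ι z) = some (i, j) := rfl
lemma fx_zx (i : ι) (j z : α) : fx ((vZ ι z : MVert ι α), vX i j) = some (i, j) := rfl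

variable (Ai) in
/-- the arc incident with `j` in `G_i` (junk value if none exists). -/
noncomputable def arcOf (i : ι) (j : α) : α × α :=
  if h : ∃ p, p ∈ Ai i ∧ (p.1 = j ∨ p.2 = j) then h.choose else (j, j)

lemma arcOf_spec {i : ι} {j : α} (hj : ∃ p, p ∈ Ai i ∧ (p.1 = j ∨ p.2 = j)) :
    arcOf Ai i j ∈ Ai i ∧ ((arcOf Ai i j).1 = j ∨ (arcOf Ai i j).2 = j) := by
  rw [arcOf, dif_pos hj]
  exact hj.choose_spec

end Bound
section Bound2

variable {α ι : Type*} [Fintype α] [Fintype ι]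
  {Vi : ι → Set α} {Ai : ι → Set (α × α)}

variable (hArcs : ∀ i, ∀ p ∈ Ai i, p.1 ∈ Vi i ∧ p.2 ∈ Vi i)
  (hAcyc : ∀ i, Acyclic (Ai i))
  (hMatch : ∀ i, ∀ v ∈ Vi i, ∃! a : α × α, a ∈ Ai i ∧ (a.1 = v ∨ a.2 = v))

/-- an edge is of `x`–`z` type. -/
def isXZ (Vi : ι → Set α) (e : MVert ι α × MVert ι α) : Prop :=
  ∃ i j, j ∈ Vi i ∧ (e = (vX i j, vZ ι j) ∨ e = (vZ ι j, vX i j))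

/-- an edge is of `x`–`y` type. -/
def isXY (Ai : ι → Set (α × α)) (e : MVert ι α × MVert ι α) : Prop :=
  ∃ i p j, p ∈ Ai i ∧ (p.1 = j ∨ p.2 = j) ∧
    (e = (vX i j, vY i p) ∨ e = (vY i p, vX i j))

lemma edge_classify {e : MVert ι α × MVert ι α}
    (h : (SimpleGraph.fromRel (mrel Vi Ai)).Adj e.1 e.2) :
    isXZ Vi e ∨ isXY Ai e := by
  rcases adj_classify h with ⟨i, j, hj, hor⟩ | ⟨i, p, j, hp, hj, hor⟩
  · exact Or.inl ⟨i, j, hj, by simpa using hor⟩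
  · exact Or.inr ⟨i, p, j, hp, hj, by simpa using hor⟩

include hArcs hAcyc hMatch in
lemma weight_le {M : Finset (MVert ι α × MVert ι α)}
    (hM : IsMatchingIn (SimpleGraph.fromRel (mrel Vi Ai)) M) :
    ∃ π : ι → Set α, IsAllocation π ∧
      ∑ e ∈ M, ew Ai (Fintype.card α) e.1 e.2
        ≤ 2 * Fintype.card α * (∑ i, (Ai i).ncard)
          + ∑ i, satis (Vi i) (Ai i) (π i) := by
  set n := Fintype.card α with hn
  have hclass : ∀ e ∈ M, isXZ Vi e ∨ isXY Ai e := fun e he =>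
    edge_classify (hM.1 e he)
  set Mz := M.filter (fun e => (fz e).isSome = true) with hMzdef
  set My := M.filter (fun e => ¬ (fz e).isSome = true) with hMydef
  have hMzM : Mz ⊆ M := Finset.filter_subset _ _
  have hMyM : My ⊆ M := Finset.filter_subset _ _
  have hzShape : ∀ e ∈ Mz, isXZ Vi e := by
    intro e he
    rcases hclass e (hMzM he) with h | h
    · exact h
    · exfalso
      obtain ⟨i, p, j, _, _, rfl | rfl⟩ := h <;>
        · have := (Finset.mem_filter.1 he).2
          simp [fz_xy, fz_yx] at this
  have hyShape : ∀ e ∈ My, isXY Ai e := by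
    intro e he
    rcases hclass e (hMyM he) with h | h
    · exfalso
      obtain ⟨i, j, _, rfl | rfl⟩ := h <;>
        · have := (Finset.mem_filter.1 he).2
          simp [fz_xz, fz_zx] at this
    · exact h
  have hsplit : ∑ e ∈ M, ew Ai n e.1 e.2
      = ∑ e ∈ Mz, ew Ai n e.1 e.2 + ∑ e ∈ My, ew Ai n e.1 e.2 :=
    (Finset.sum_filter_add_sum_filter_not M _ _).symm
  have hyw : ∀ e ∈ My, ew Ai n e.1 e.2 = 2 * n := by
    intro e he
    obtain ⟨i, p, j, hp, hj, rfl | rfl⟩ := hyShape e he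
    · exact ew_xy n i i j p
    · exact ew_yx n i i j p
  have hsumy : ∑ e ∈ My, ew Ai n e.1 e.2 = 2 * n * My.card := by
    rw [Finset.sum_congr rfl hyw, Finset.sum_const, smul_eq_mul, mul_comm]
  have hfyMaps : ∀ e ∈ My, fy e ∈ (TA Ai).image some := by
    intro e he
    obtain ⟨i, p, j, hp, hj, rfl | rfl⟩ := hyShape e he <;>
      [rw [fy_xy]; rw [fy_yx]] <;>
      exact Finset.mem_image.2 ⟨(i, p), mem_TA.2 hp, rfl⟩
  have hfyInj : ∀ e ∈ My, ∀ f ∈ My, fy e = fy f → e = f := by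
    intro e he f hf hef
    obtain ⟨i, p, j, hp, hj, hee⟩ := hyShape e he
    obtain ⟨i', p', j', hp', hj', hff⟩ := hyShape f hf
    have h1 : fy e = some (i, p) := by rcases hee with rfl | rfl <;> rfl
    have h2 : fy f = some (i', p') := by rcases hff with rfl | rfl <;> rfl
    rw [h1, h2] at hef
    obtain ⟨rfl, rfl⟩ : i = i' ∧ p = p' := by simpa [Prod.ext_iff] using hef
    refine matching_shared hM (hMyM he) (hMyM hf) (x := vY i p) ?_ ?_
    · rcases hee with rfl | rfl <;> simp
    · rcases hff with rfl | rfl <;> simp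
  have hyCard : My.card ≤ (TA Ai).card := by
    have h := Finset.card_le_card_of_injOn fy hfyMaps
      (fun e he f hf h => hfyInj e he f hf h)
    rwa [Finset.card_image_of_injective _ (Option.some_injective _)] at h
  have hzCard : Mz.card ≤ n := by
    have h : Mz.card ≤ ((Finset.univ : Finset α).image some).card := by
      apply Finset.card_le_card_of_injOn fz
      · intro e he
        obtain ⟨i, j, hj, rfl | rfl⟩ := hzShape e he <;>
          [rw [fz_xz]; rw [fz_zx]] <;>
          exact Finset.mem_image.2 ⟨j, Finset.mem_univ j, rfl⟩
      · intro e he f hf hef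
        obtain ⟨i, j, hj, hee⟩ := hzShape e he
        obtain ⟨i', j', hj', hff⟩ := hzShape f hf
        have h1 : fz e = some j := by rcases hee with rfl | rfl <;> rfl
        have h2 : fz f = some j' := by rcases hff with rfl | rfl <;> rfl
        rw [h1, h2] at hef
        obtain rfl : j = j' := by simpa using hef
        refine matching_shared hM (hMzM he) (hMzM hf) (x := vZ ι j) ?_ ?_
        · rcases hee with rfl | rfl <;> simp
        · rcases hff with rfl | rfl <;> simp
    rwa [Finset.card_image_of_injective _ (Option.some_injective _),
      Finset.card_univ] at h
  have hzw : ∀ e ∈ Mz, ew Ai n e.1 e.2 ≤ 2 := by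
    intro e he
    obtain ⟨i, j, hj, rfl | rfl⟩ := hzShape e he
    · exact ew_xz_le n i j j
    · exact ew_zx_le n i j j
  rcases lt_or_eq_of_le hyCard with hlt | heqc
  -- Case A : some y-vertex is unmatched
  · refine ⟨fun _ => ∅, fun i j _ => by simp, ?_⟩
    have h1 : ∑ e ∈ Mz, ew Ai n e.1 e.2 ≤ 2 * n := by
      calc ∑ e ∈ Mz, ew Ai n e.1 e.2 ≤ ∑ _e ∈ Mz, 2 := Finset.sum_le_sum hzw
      _ = 2 * Mz.card := by rw [Finset.sum_const, smul_eq_mul, mul_comm]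
      _ ≤ 2 * n := Nat.mul_le_mul_left 2 hzCard
    have h2 : 2 * n * My.card + 2 * n ≤ 2 * n * (TA Ai).card := by
      have h3 : 2 * n * (My.card + 1) ≤ 2 * n * (TA Ai).card :=
        Nat.mul_le_mul_left _ (Nat.succ_le_of_lt hlt)
      rw [Nat.mul_add, Nat.mul_one] at h3
      exact h3
    rw [card_TA] at h2
    rw [hsplit, hsumy]
    omega
  -- Case B : all y-vertices are matched
  · have hsub : My.image fy ⊆ (TA Ai).image some := by
      intro o ho
      obtain ⟨e, he, rfl⟩ := Finset.mem_image.1 ho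
      exact hfyMaps e he
    have himg : My.image fy = (TA Ai).image some := by
      apply Finset.eq_of_subset_of_card_le hsub
      rw [Finset.card_image_of_injective _ (Option.some_injective _),
        Finset.card_image_of_injOn (fun e he f hf h => hfyInj e he f hf h)]
      exact le_of_eq heqc.symm
    have ySat : ∀ i p, p ∈ Ai i → ∃ e ∈ M, ∃ j, (p.1 = j ∨ p.2 = j) ∧
        (e = (vX i j, vY i p) ∨ e = (vY i p, vX i j)) := by
      intro i p hp
      have hmem : some (i, p) ∈ My.image fy := by
        rw [himg]
        exact Finset.mem_image.2 ⟨(i, p), mem_TA.2 hp, rfl⟩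
      obtain ⟨e, he, hfe⟩ := Finset.mem_image.1 hmem
      obtain ⟨i', p', j', hp', hj', hee⟩ := hyShape e he
      have h1 : fy e = some (i', p') := by rcases hee with rfl | rfl <;> rfl
      rw [h1] at hfe
      obtain ⟨rfl, rfl⟩ : i' = i ∧ p' = p := by simpa [Prod.ext_iff] using hfe
      exact ⟨e, hMyM he, j', hj', hee⟩
    set πM : ι → Set α := fun i =>
      {j | j ∈ Vi i ∧ ∃ e ∈ M, e = (vX i j, vZ ι j) ∨ e = (vZ ι j, vX i j)} with hπM
    have hAlloc : IsAllocation πM := by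
      intro i i' hne
      rw [Set.disjoint_left]
      rintro j ⟨hjV, e, he, hee⟩ ⟨hjV', f, hf, hff⟩
      have hef : e = f := matching_shared hM he hf (x := vZ ι j)
        (by rcases hee with rfl | rfl <;> simp) (by rcases hff with rfl | rfl <;> simp)
      subst hef
      rcases hee with h1 | h1 <;> rcases hff with h2 | h2 <;>
        have h3 := h1.symm.trans h2 <;>
        first
          | exact hne (by simpa using congrArg Prod.fst h3)
          | exact hne (by simpa using congrArg Prod.snd h3)
          | simp at h3
    refine ⟨πM, hAlloc, ?_⟩
    set g : MVert ι α × MVert ι α → Option (ι × (α × α)) :=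
      fun e => (fx e).map (fun ij => (ij.1, arcOf Ai ij.1 ij.2)) with hg
    set G : Option (ι × (α × α)) → ℕ :=
      fun o => o.elim 0 (fun ip => arcval (πM ip.1) ip.2) with hG
    -- facts about each xz edge
    have hfact : ∀ e ∈ Mz, ∃ i j, j ∈ Vi i ∧
        (e = (vX i j, vZ ι j) ∨ e = (vZ ι j, vX i j)) ∧
        g e = some (i, arcOf Ai i j) ∧
        arcOf Ai i j ∈ Ai i ∧ ((arcOf Ai i j).1 = j ∨ (arcOf Ai i j).2 = j) := by
      intro e he
      obtain ⟨i, j, hjV, hee⟩ := hzShape e he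
      have hfx : fx e = some (i, j) := by rcases hee with rfl | rfl <;> rfl
      have hex : ∃ p, p ∈ Ai i ∧ (p.1 = j ∨ p.2 = j) := by
        obtain ⟨p, ⟨hpA, hpj⟩, -⟩ := hMatch i j hjV
        exact ⟨p, hpA, hpj⟩
      obtain ⟨hpA, hpj⟩ := arcOf_spec hex
      exact ⟨i, j, hjV, hee, by simp [hg, hfx], hpA, hpj⟩
    have hzle : ∀ e ∈ Mz, ew Ai n e.1 e.2 ≤ G (g e) := by
      intro e he
      obtain ⟨i, j, hjV, hee, hge, hpA, hpj⟩ := hfact e he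
      have hjπ : j ∈ πM i := ⟨hjV, e, hMzM he, hee⟩
      rw [hge]
      show ew Ai n e.1 e.2 ≤ arcval (πM i) (arcOf Ai i j)
      by_cases hh : ∃ a ∈ Ai i, a.2 = j
      · have h1 : ew Ai n e.1 e.2 = 1 := by
          rcases hee with rfl | rfl
          · exact ew_xz_head n j hh
          · exact ew_zx_head n j hh
        rw [h1]
        unfold arcval
        split_ifs with ha hb
        · omega
        · omega
        · exfalso
          rcases hpj with h | h
          · exact ha (by rw [h]; exact hjπ)
          · exact hb (by rw [h]; exact hjπ)
      · have h1 : ew Ai n e.1 e.2 = 2 := by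
          rcases hee with rfl | rfl
          · exact ew_xz_tail n j hh
          · exact ew_zx_tail n j hh
        rw [h1]
        have hj1 : (arcOf Ai i j).1 = j := by
          rcases hpj with h | h
          · exact h
          · exact absurd ⟨arcOf Ai i j, hpA, h⟩ hh
        unfold arcval
        rw [if_pos (show (arcOf Ai i j).1 ∈ πM i by rw [hj1]; exact hjπ)]
    have hginj : ∀ e ∈ Mz, ∀ f ∈ Mz, g e = g f → e = f := by
      intro e he f hf hef
      obtain ⟨i, j, hjV, hee, hge, hpA, hpj⟩ := hfact e he
      obtain ⟨i', j', hjV', hff, hgf, hpA', hpj'⟩ := hfact f hf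
      rw [hge, hgf] at hef
      obtain ⟨rfl, harc⟩ : i = i' ∧ arcOf Ai i j = arcOf Ai i' j' := by
        simpa [Prod.ext_iff] using hef
      rw [← harc] at hpj'
      by_cases hjj : j = j'
      · subst hjj
        refine matching_shared hM (hMzM he) (hMzM hf) (x := vX i j) ?_ ?_
        · rcases hee with rfl | rfl <;> simp
        · rcases hff with rfl | rfl <;> simp
      · exfalso
        obtain ⟨e0, he0, j0, hj0, he0s⟩ := ySat i (arcOf Ai i j) hpA
        have hj0' : j0 = j ∨ j0 = j' := by
          rcases hpj with h1 | h1 <;> rcases hpj' with h2 | h2 <;>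
            rcases hj0 with h0 | h0 <;>
            first
              | exact absurd (h1.symm.trans h2) hjj
              | exact Or.inl (h0.symm.trans h1)
              | exact Or.inr (h0.symm.trans h2)
        rcases hj0' with rfl | rfl
        · have h := matching_shared hM he0 (hMzM he) (x := vX i j0)
            (by rcases he0s with rfl | rfl <;> simp)
            (by rcases hee with rfl | rfl <;> simp)
          rcases he0s with rfl | rfl <;> rcases hee with h' | h' <;>
            (have h4 := h.trans h'; simp at h4)
        · have h := matching_shared hM he0 (hMzM hf) (x := vX i j0)
            (by rcases he0s with rfl | rfl <;> simp)
            (by rcases hff with rfl | rfl <;> simp)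
          rcases he0s with rfl | rfl <;> rcases hff with h' | h' <;>
            (have h4 := h.trans h'; simp at h4)
    have hsub2 : Mz.image g ⊆ (TA Ai).image some := by
      intro o ho
      obtain ⟨e, he, rfl⟩ := Finset.mem_image.1 ho
      obtain ⟨i, j, hjV, hee, hge, hpA, hpj⟩ := hfact e he
      rw [hge]
      exact Finset.mem_image.2 ⟨(i, arcOf Ai i j), mem_TA.2 hpA, rfl⟩
    have key : ∑ e ∈ Mz, ew Ai n e.1 e.2 ≤ ∑ i, satis (Vi i) (Ai i) (πM i) := by
      calc ∑ e ∈ Mz, ew Ai n e.1 e.2 ≤ ∑ e ∈ Mz, G (g e) := Finset.sum_le_sum hzle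
      _ = ∑ o ∈ Mz.image g, G o := (Finset.sum_image hginj).symm
      _ ≤ ∑ o ∈ (TA Ai).image some, G o :=
          Finset.sum_le_sum_of_subset_of_nonneg hsub2 (fun _ _ _ => Nat.zero_le _)
      _ = ∑ ip ∈ TA Ai, G (some ip) :=
          Finset.sum_image (fun x _ y _ h => Option.some_injective _ h)
      _ = ∑ ip ∈ TA Ai, arcval (πM ip.1) ip.2 := rfl
      _ = ∑ i, ∑ p ∈ AF Ai i, arcval (πM i) p := sum_TA _
      _ = ∑ i, satis (Vi i) (Ai i) (πM i) :=
          Finset.sum_congr rfl fun i _ => (satis_eq_sum hArcs hAcyc hMatch i (πM i)).symm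
    rw [hsplit, hsumy, heqc, card_TA]
    omega

end Bound2
theorem stmt6 {α ι : Type*} [Fintype α] [Fintype ι]
    (Vi : ι → Set α) (Ai : ι → Set (α × α))
    (hArcs : ∀ i, ∀ p ∈ Ai i, p.1 ∈ Vi i ∧ p.2 ∈ Vi i)
    (hAcyc : ∀ i, Acyclic (Ai i))
    (hMatch : ∀ i, ∀ v ∈ Vi i, ∃! a : α × α, a ∈ Ai i ∧ (a.1 = v ∨ a.2 = v)) :
    let W : ℕ := sSup {w : ℕ | ∃ M : Finset (MVert ι α × MVert ι α),
      IsMatchingIn (SimpleGraph.fromRel (mrel Vi Ai)) M ∧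
      w = ∑ p ∈ M, ew Ai (Fintype.card α) p.1 p.2}
    ((↑(sSup {s : ℕ | ∃ π : ι → Set α, IsAllocation π ∧
        s = ∑ i, satis (Vi i) (Ai i) (π i)}) : ℤ)
      = (W : ℤ) - 2 * (Fintype.card α) * ∑ i, ((Ai i).ncard : ℤ)) ∧
    ((↑(sInf {d : ℕ | ∃ π : ι → Set α, IsAllocation π ∧
        d = ∑ i, dissat (Vi i) (Ai i) (π i)}) : ℤ)
      = (∑ i, ((Vi i).ncard : ℤ)) + 2 * (Fintype.card α) * (∑ i, ((Ai i).ncard : ℤ)) - W) := by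
  intro W
  set n := Fintype.card α with hn
  set C : ℕ := 2 * n * ∑ i, (Ai i).ncard with hC
  set T : ℕ := ∑ i, (Vi i).ncard with hT
  set Sset : Set ℕ := {s : ℕ | ∃ π : ι → Set α, IsAllocation π ∧
      s = ∑ i, satis (Vi i) (Ai i) (π i)} with hSset
  set Dset : Set ℕ := {d : ℕ | ∃ π : ι → Set α, IsAllocation π ∧
      d = ∑ i, dissat (Vi i) (Ai i) (π i)} with hDset
  set Wset : Set ℕ := {w : ℕ | ∃ M : Finset (MVert ι α × MVert ι α),
      IsMatchingIn (SimpleGraph.fromRel (mrel Vi Ai)) M ∧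
      w = ∑ p ∈ M, ew Ai (Fintype.card α) p.1 p.2} with hWset
  set S := sSup Sset with hS
  -- basic facts about `Sset`
  have hSne : Sset.Nonempty :=
    ⟨∑ i, satis (Vi i) (Ai i) ∅, fun _ => ∅, fun i j _ => by simp, rfl⟩
  have hSbdd : BddAbove Sset := by
    refine ⟨T, ?_⟩
    rintro s ⟨π, hπ, rfl⟩
    exact Finset.sum_le_sum fun i _ => satis_le_ncard i (π i)
  obtain ⟨πs, hπs, hπsS⟩ : S ∈ Sset := Nat.sSup_mem hSne hSbdd
  -- the total dissatisfaction and satisfaction sum to `T`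
  have hsum : ∀ π : ι → Set α,
      (∑ i, satis (Vi i) (Ai i) (π i)) + (∑ i, dissat (Vi i) (Ai i) (π i)) = T := by
    intro π
    rw [← Finset.sum_add_distrib]
    exact Finset.sum_congr rfl fun i _ => satis_add_dissat i (π i)
  have hST : S ≤ T := by
    rw [hπsS]
    exact Finset.sum_le_sum fun i _ => satis_le_ncard i (πs i)
  -- `C + S` is a matching weight
  have hmem : C + S ∈ Wset := by
    refine ⟨MA Ai πs, MA_isMatching hArcs hAcyc hMatch hπs, ?_⟩
    rw [sum_MA hArcs hAcyc hMatch n, hπsS, hC]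
    omega
  -- every matching weight is at most `C + S`
  have hub : ∀ w ∈ Wset, w ≤ C + S := by
    rintro w ⟨M, hM, rfl⟩
    obtain ⟨π, hπ, hle⟩ := weight_le hArcs hAcyc hMatch hM
    have h2 : ∑ i, satis (Vi i) (Ai i) (π i) ≤ S := le_csSup hSbdd ⟨π, hπ, rfl⟩
    calc ∑ p ∈ M, ew Ai (Fintype.card α) p.1 p.2
        ≤ 2 * Fintype.card α * (∑ i, (Ai i).ncard) + ∑ i, satis (Vi i) (Ai i) (π i) := hle
      _ ≤ C + S := by rw [hC, hn]; omega
  have hW : W = C + S := by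
    refine le_antisymm (csSup_le ⟨C + S, hmem⟩ hub) (le_csSup ⟨C + S, hub⟩ hmem)
  -- the minimum dissatisfaction
  have hDmem : T - S ∈ Dset := by
    refine ⟨πs, hπs, ?_⟩
    have := hsum πs
    omega
  have hDge : ∀ d ∈ Dset, T - S ≤ d := by
    rintro d ⟨π, hπ, rfl⟩
    have h1 : ∑ i, satis (Vi i) (Ai i) (π i) ≤ S := le_csSup hSbdd ⟨π, hπ, rfl⟩
    have h2 := hsum π
    omega
  have hD : sInf Dset = T - S :=
    le_antisymm (Nat.sInf_le hDmem) (le_csInf ⟨T - S, hDmem⟩ hDge)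
  -- cast computations
  have hCcast : (C : ℤ) = 2 * (n : ℤ) * ∑ i, ((Ai i).ncard : ℤ) := by
    rw [hC]; push_cast; ring
  have hTcast : (T : ℤ) = ∑ i, ((Vi i).ncard : ℤ) := by
    rw [hT]; push_cast; ring
  constructor
  · rw [hW]
    push_cast [hCcast]
    ring
  · rw [hD, Nat.cast_sub hST, hW]
    push_cast [hCcast, hTcast]
    ring
end

section
/- Suppose each preference graph G_i is a directed path on V_i, and for v ∈ V let w(v, i) = ℓ_i(v), the number of predecessors of v on the path G_i if v ∈ V_i, and w(v, i) = |V_i| if v ∉ V_i. Then the minimum total dissatisfaction Σ_{i∈K} δ_π(i) over all allocations π equals the minimum over all partial injective maps σ from K to V of Σ_{i∈K} c_σ(i), where c_σ(i) = w(σ(i), i) if σ(i) is defined and c_σ(i) = |V_i| otherwise. -/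
/-- The set of predecessors of `v`: vertices with a directed path of positive length to `v`. -/
def Pred {α : Type*} (A : Set (α × α)) (v : α) : Set α :=
  {u | Relation.TransGen (fun a b => (a, b) ∈ A) u v}

/-- `(Vi, A)` is a directed path: the vertices can be ordered `f 0, …, f (m-1)` so that
the arcs are exactly the pairs of consecutive vertices. -/
def IsDirPath {α : Type*} (Vi : Set α) (A : Set (α × α)) : Prop :=
  ∃ (m : ℕ) (f : ℕ → α), Set.InjOn f (Set.Iio m) ∧ Vi = f '' Set.Iio m ∧
    A = {p | ∃ k, k + 1 < m ∧ p = (f k, f (k + 1))}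

-- The assignment weight of item `v` for an agent with a path preference graph:
-- the number of predecessors of `v` on the path if `v` is on the path, `|V_i|` otherwise.
open scoped Classical in
noncomputable def pathW {α : Type*} (Vi : Set α) (A : Set (α × α)) (v : α) : ℕ :=
  if v ∈ Vi then (Pred A v).ncard else Vi.ncard

section Helpers

variable {α : Type*}

lemma ncard_Iio (n : ℕ) : (Set.Iio n).ncard = n := by
  rw [Set.ncard_eq_toFinset_card']; simp

lemma reflTrans_index {m : ℕ} {f : ℕ → α} {A : Set (α × α)}
    (hinj : Set.InjOn f (Set.Iio m))
    (hA : A = {p | ∃ k, k + 1 < m ∧ p = (f k, f (k + 1))}) :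
    ∀ u v, Relation.ReflTransGen (fun a b => (a, b) ∈ A) u v →
      ∀ l, l < m → v = f l → ∃ k, k ≤ l ∧ u = f k := by
  intro u v h
  induction h with
  | refl => exact fun l hl hv => ⟨l, le_rfl, hv⟩
  | tail h1 h2 ih =>
    intro l hl hv
    rw [hA] at h2
    obtain ⟨k, hk, hp⟩ := h2
    rw [Prod.ext_iff] at hp
    obtain ⟨hb, hc⟩ := hp
    have hkl : k + 1 = l := hinj hk hl (hv ▸ hc).symm
    obtain ⟨k', hk', hu⟩ := ih k (by omega) hb
    exact ⟨k', by omega, hu⟩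

lemma transGen_index {m : ℕ} {f : ℕ → α} {A : Set (α × α)}
    (hinj : Set.InjOn f (Set.Iio m))
    (hA : A = {p | ∃ k, k + 1 < m ∧ p = (f k, f (k + 1))}) :
    ∀ u v, Relation.TransGen (fun a b => (a, b) ∈ A) u v →
      ∀ l, l < m → v = f l → ∃ k, k < l ∧ u = f k := by
  intro u v h
  induction h with
  | single h =>
    intro l hl hv
    rw [hA] at h
    obtain ⟨k, hk, hp⟩ := h
    rw [Prod.ext_iff] at hp
    obtain ⟨hb, hc⟩ := hp
    have hkl : k + 1 = l := hinj hk hl (hv ▸ hc).symm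
    exact ⟨k, by omega, hb⟩
  | tail h1 h2 ih =>
    intro l hl hv
    rw [hA] at h2
    obtain ⟨k, hk, hp⟩ := h2
    rw [Prod.ext_iff] at hp
    obtain ⟨hb, hc⟩ := hp
    have hkl : k + 1 = l := hinj hk hl (hv ▸ hc).symm
    obtain ⟨k', hk', hu⟩ := ih k (by omega) hb
    exact ⟨k', by omega, hu⟩

lemma reflTrans_of_le {m : ℕ} {f : ℕ → α} {A : Set (α × α)}
    (hA : A = {p | ∃ k, k + 1 < m ∧ p = (f k, f (k + 1))}) :
    ∀ k l, k ≤ l → l < m →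
      Relation.ReflTransGen (fun a b => (a, b) ∈ A) (f k) (f l) := by
  intro k l hkl
  induction l, hkl using Nat.le_induction with
  | base => exact fun _ => Relation.ReflTransGen.refl
  | succ n hn ih =>
    intro hlt
    exact Relation.ReflTransGen.tail (ih (by omega)) (by rw [hA]; exact ⟨n, hlt, rfl⟩)

lemma transGen_of_lt {m : ℕ} {f : ℕ → α} {A : Set (α × α)}
    (hA : A = {p | ∃ k, k + 1 < m ∧ p = (f k, f (k + 1))}) :
    ∀ k l, k < l → l < m →
      Relation.TransGen (fun a b => (a, b) ∈ A) (f k) (f l) := by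
  intro k l hkl hl
  obtain ⟨n, rfl⟩ : ∃ n, l = n + 1 := ⟨l - 1, by omega⟩
  exact Relation.TransGen.tail' (reflTrans_of_le hA k n (by omega) (by omega))
    (by rw [hA]; exact ⟨n, hl, rfl⟩)

lemma pred_eq {m : ℕ} {f : ℕ → α} {A : Set (α × α)}
    (hinj : Set.InjOn f (Set.Iio m))
    (hA : A = {p | ∃ k, k + 1 < m ∧ p = (f k, f (k + 1))}) :
    ∀ l, l < m → Pred A (f l) = f '' Set.Iio l := by
  intro l hl
  ext u
  constructor
  · intro hu
    obtain ⟨k, hk, rfl⟩ := transGen_index hinj hA u (f l) hu l hl rfl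
    exact ⟨k, hk, rfl⟩
  · rintro ⟨k, hk, rfl⟩
    exact transGen_of_lt hA k l hk hl

lemma ncard_image_Iio {m : ℕ} {f : ℕ → α} (hinj : Set.InjOn f (Set.Iio m))
    (l : ℕ) (hl : l ≤ m) : (f '' Set.Iio l).ncard = l := by
  rw [Set.ncard_image_of_injOn (hinj.mono (Set.Iio_subset_Iio hl)), ncard_Iio]

lemma pathW_f {Vi : Set α} {m : ℕ} {f : ℕ → α} {A : Set (α × α)}
    (hinj : Set.InjOn f (Set.Iio m)) (hV : Vi = f '' Set.Iio m)
    (hA : A = {p | ∃ k, k + 1 < m ∧ p = (f k, f (k + 1))})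
    (k : ℕ) (hk : k < m) : pathW Vi A (f k) = k := by
  rw [pathW, if_pos (by rw [hV]; exact ⟨k, hk, rfl⟩), pred_eq hinj hA k hk,
    ncard_image_Iio hinj k hk.le]

lemma dissat_of_empty {Vi : Set α} {m : ℕ} {f : ℕ → α} {A : Set (α × α)}
    (hV : Vi = f '' Set.Iio m)
    (P : Set α) (hP : ∀ j, j < m → f j ∉ P) :
    dissat Vi A P = Vi.ncard := by
  unfold dissat
  congr 1
  ext v
  simp only [Set.mem_setOf_eq, and_iff_left_iff_imp]
  rintro hv ⟨u, huP, huV, _⟩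
  rw [hV] at huV
  obtain ⟨j, hj, rfl⟩ := huV
  exact hP j hj huP

lemma dissat_of_mem {Vi : Set α} {m : ℕ} {f : ℕ → α} {A : Set (α × α)}
    (hinj : Set.InjOn f (Set.Iio m)) (hV : Vi = f '' Set.Iio m)
    (hA : A = {p | ∃ k, k + 1 < m ∧ p = (f k, f (k + 1))})
    (P : Set α) (k₀ : ℕ) (hk₀ : k₀ < m) (hmem : f k₀ ∈ P)
    (hmin : ∀ j, j < k₀ → f j ∉ P) :
    dissat Vi A P = k₀ := by
  have hU : {v | v ∈ Vi ∧ ¬ ∃ u, u ∈ P ∧ u ∈ Vi ∧ Dominates A u v} = f '' Set.Iio k₀ := by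
    ext v
    constructor
    · rintro ⟨hv, hnd⟩
      rw [hV] at hv
      obtain ⟨l, hl, rfl⟩ := hv
      refine ⟨l, Set.mem_Iio.mpr ?_, rfl⟩
      by_contra hle
      push_neg at hle
      exact hnd ⟨f k₀, hmem, by rw [hV]; exact ⟨k₀, hk₀, rfl⟩,
        reflTrans_of_le hA k₀ l hle hl⟩
    · rintro ⟨l, hl, rfl⟩
      rw [Set.mem_Iio] at hl
      have hlm : l < m := lt_trans hl hk₀
      refine ⟨by rw [hV]; exact ⟨l, hlm, rfl⟩, ?_⟩
      rintro ⟨u, huP, huV, hdom⟩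
      obtain ⟨k, hk, rfl⟩ := reflTrans_index hinj hA u (f l) hdom l hlm rfl
      exact hmin k (by omega) huP
  rw [dissat, hU, ncard_image_Iio hinj k₀ hk₀.le]

lemma Vi_ncard {Vi : Set α} {m : ℕ} {f : ℕ → α}
    (hinj : Set.InjOn f (Set.Iio m)) (hV : Vi = f '' Set.Iio m) :
    Vi.ncard = m := by
  rw [hV, ncard_image_Iio hinj m le_rfl]

end Helpers


theorem stmt8 {α ι : Type*} [Fintype α] [Fintype ι]
    (Vi : ι → Set α) (A : ι → Set (α × α))
    (hpath : ∀ i, IsDirPath (Vi i) (A i)) :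
    sInf {d : ℕ | ∃ π : ι → Set α, IsAllocation π ∧
        d = ∑ i, dissat (Vi i) (A i) (π i)} =
    sInf {c : ℕ | ∃ σ : ι → Option α,
        (∀ i j : ι, ∀ v : α, σ i = some v → σ j = some v → i = j) ∧
        c = ∑ i, (σ i).elim ((Vi i).ncard) (fun v => pathW (Vi i) (A i) v)} := by
  classical
  choose m f hinj hV hA using hpath
  set L := {d : ℕ | ∃ π : ι → Set α, IsAllocation π ∧
      d = ∑ i, dissat (Vi i) (A i) (π i)} with hL
  set R := {c : ℕ | ∃ σ : ι → Option α,
      (∀ i j : ι, ∀ v : α, σ i = some v → σ j = some v → i = j) ∧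
      c = ∑ i, (σ i).elim ((Vi i).ncard) (fun v => pathW (Vi i) (A i) v)} with hR
  have hLne : L.Nonempty :=
    ⟨_, fun _ => ∅, fun i j _ => Set.disjoint_empty ∅, rfl⟩
  have hRne : R.Nonempty := ⟨_, fun _ => none, fun i j v h _ => by simp at h, rfl⟩
  apply le_antisymm
  · -- sInf L ≤ sInf R
    obtain ⟨σ, hσ, hc⟩ := Nat.sInf_mem hRne
    set π : ι → Set α := fun i => (σ i).elim ∅ (fun v => {v}) with hπ
    have halloc : IsAllocation π := by
      intro i j hij
      rw [Set.disjoint_left]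
      intro x hxi hxj
      apply hij
      match hi : σ i, hj : σ j with
      | none, _ => rw [hπ] at hxi; simp [hi] at hxi
      | some a, none => rw [hπ] at hxj; simp [hj] at hxj
      | some a, some b =>
        rw [hπ] at hxi hxj
        simp [hi] at hxi
        simp [hj] at hxj
        exact hσ i j x (by rw [hi, hxi]) (by rw [hj, hxj])
    have hsum : ∀ i, dissat (Vi i) (A i) (π i) =
        (σ i).elim ((Vi i).ncard) (fun v => pathW (Vi i) (A i) v) := by
      intro i
      match hi : σ i with
      | none =>
        have : π i = ∅ := by rw [hπ]; simp [hi]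
        rw [this, Option.elim, dissat_of_empty (hV i) ∅ (fun j _ h => h)]
      | some v =>
        have hpi : π i = {v} := by rw [hπ]; simp [hi]
        rw [hpi, Option.elim]
        by_cases hvV : v ∈ Vi i
        · obtain ⟨l, hl, rfl⟩ := by rw [hV i] at hvV; exact hvV
          rw [Set.mem_Iio] at hl
          rw [dissat_of_mem (hinj i) (hV i) (hA i) {f i l} l hl rfl
            (fun j hj hje => by
              have := (hinj i) (Set.mem_Iio.mpr (lt_trans hj hl)) (Set.mem_Iio.mpr hl) hje
              omega),
            pathW_f (hinj i) (hV i) (hA i) l hl]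
        · rw [dissat_of_empty (hV i) {v} (fun j hj hje => by
            apply hvV; rw [Set.mem_singleton_iff] at hje
            rw [hV i, ← hje]; exact ⟨j, Set.mem_Iio.mpr hj, rfl⟩),
            pathW, if_neg hvV]
    calc sInf L ≤ ∑ i, dissat (Vi i) (A i) (π i) := Nat.sInf_le ⟨π, halloc, rfl⟩
      _ = sInf R := by rw [hc]; exact Finset.sum_congr rfl (fun i _ => hsum i)
  · -- sInf R ≤ sInf L
    obtain ⟨π, halloc, hd⟩ := Nat.sInf_mem hLne
    set S : ι → Set ℕ := fun i => {j | j < m i ∧ f i j ∈ π i} with hS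
    set σ : ι → Option α := fun i =>
      if h : (S i).Nonempty then some (f i (sInf (S i))) else none with hσdef
    have hmemS : ∀ i, (S i).Nonempty → sInf (S i) ∈ S i := fun i h => Nat.sInf_mem h
    have hσ : ∀ i j : ι, ∀ v : α, σ i = some v → σ j = some v → i = j := by
      intro i j v hi hj
      by_contra hij
      rw [hσdef] at hi hj
      simp only at hi hj
      split_ifs at hi hj with h1 h2
      have hvi : v ∈ π i := by
        rw [← Option.some_inj.mp hi]; exact (hmemS i h1).2
      have hvj : v ∈ π j := by
        rw [← Option.some_inj.mp hj]; exact (hmemS j h2).2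
      exact Set.disjoint_left.mp (halloc hij) hvi hvj
    have hsum : ∀ i, (σ i).elim ((Vi i).ncard) (fun v => pathW (Vi i) (A i) v) =
        dissat (Vi i) (A i) (π i) := by
      intro i
      rw [hσdef]
      simp only
      split_ifs with h1
      · set k₀ := sInf (S i) with hk₀def
        obtain ⟨hk₀m, hk₀P⟩ := hmemS i h1
        rw [Option.elim, pathW_f (hinj i) (hV i) (hA i) k₀ hk₀m,
          dissat_of_mem (hinj i) (hV i) (hA i) (π i) k₀ hk₀m hk₀P
            (fun j hj hjP => Nat.notMem_of_lt_sInf hj ⟨lt_trans hj hk₀m, hjP⟩)]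
      · rw [Option.elim, dissat_of_empty (hV i) (π i)
          (fun j hj hjP => h1 ⟨j, hj, hjP⟩)]
    calc sInf R ≤ ∑ i, (σ i).elim ((Vi i).ncard) (fun v => pathW (Vi i) (A i) v) :=
        Nat.sInf_le ⟨σ, hσ, rfl⟩
      _ = sInf L := by rw [hd]; exact Finset.sum_congr rfl (fun i _ => hsum i)
end

section
/- Suppose each preference graph G_i is a disjoint union of k_i vertex-disjoint directed paths P_{i,1}, …, P_{i,k_i}. Consider the derived instance on the same item set V with agent set K' = {(i, r) : i ∈ K, 1 ≤ r ≤ k_i}, where the preference graph of agent (i, r) is the single path P_{i,r}. Then the minimum total dissatisfaction over all allocations of the original instance equals the minimum total dissatisfaction over all allocations of the derived instance. -/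
lemma ncard_iUnion_fin {α : Type*} [Fintype α] {n : ℕ} (S : Fin n → Set α)
    (h : Pairwise (Function.onFun Disjoint S)) : (⋃ r, S r).ncard = ∑ r, (S r).ncard := by
  classical
  rw [Set.ncard_eq_toFinset_card', Set.toFinset_iUnion]
  rw [show ((Finset.univ : Finset (Fin n)).biUnion fun r => (S r).toFinset).card
      = ∑ r, (S r).toFinset.card from Finset.card_biUnion (by
        intro x _ y _ hxy
        simp only [Finset.disjoint_left, Set.mem_toFinset]
        exact fun a ha => Set.disjoint_left.1 (h hxy) ha)]
  simp [Set.ncard_eq_toFinset_card']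

lemma dirpath_sub {α : Type*} {Vi : Set α} {A : Set (α × α)} (h : IsDirPath Vi A) :
    A ⊆ Vi ×ˢ Vi := by
  obtain ⟨m, f, hinj, hV, hA⟩ := h
  rintro ⟨a, b⟩ hp
  obtain ⟨kk, hk, heq⟩ := hA ▸ hp
  obtain ⟨h1, h2⟩ := Prod.mk.injEq .. ▸ heq
  constructor
  · exact hV ▸ ⟨kk, Nat.lt_of_succ_lt hk, h1.symm⟩
  · exact hV ▸ ⟨kk + 1, hk, h2.symm⟩

lemma reach_stay {α : Type*} {n : ℕ} {Vir : Fin n → Set α} {Air : Fin n → Set (α × α)}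
    (hA : ∀ s, Air s ⊆ Vir s ×ˢ Vir s)
    (hdisj : Pairwise fun r s => Disjoint (Vir r) (Vir s))
    {r : Fin n} {u v : α} (hu : u ∈ Vir r)
    (h : Relation.ReflTransGen (fun a b => (a, b) ∈ ⋃ s, Air s) u v) :
    v ∈ Vir r ∧ Relation.ReflTransGen (fun a b => (a, b) ∈ Air r) u v := by
  induction h with
  | refl => exact ⟨hu, .refl⟩
  | tail _ hbc ih =>
    obtain ⟨hb, hpath⟩ := ih
    obtain ⟨s, hs⟩ := Set.mem_iUnion.1 hbc
    have hbs := (hA s hs).1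
    have hsr : s = r := by
      by_contra hne
      exact Set.disjoint_left.1 (hdisj hne) hbs hb
    subst hsr
    exact ⟨(hA s hs).2, hpath.tail hs⟩

lemma dissat_decomp {α : Type*} [Fintype α] {n : ℕ} (Vir : Fin n → Set α)
    (Air : Fin n → Set (α × α)) (hA : ∀ s, Air s ⊆ Vir s ×ˢ Vir s)
    (hdisj : Pairwise fun r s => Disjoint (Vir r) (Vir s)) (P : Set α) :
    dissat (⋃ r, Vir r) (⋃ r, Air r) P = ∑ r, dissat (Vir r) (Air r) P := by
  unfold dissat
  have key : {v | v ∈ ⋃ r, Vir r ∧ ¬ ∃ u, u ∈ P ∧ u ∈ ⋃ r, Vir r ∧ Dominates (⋃ r, Air r) u v}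
      = ⋃ r, {v | v ∈ Vir r ∧ ¬ ∃ u, u ∈ P ∧ u ∈ Vir r ∧ Dominates (Air r) u v} := by
    ext v
    simp only [Set.mem_setOf_eq, Set.mem_iUnion]
    constructor
    · rintro ⟨⟨r, hv⟩, hno⟩
      refine ⟨r, hv, fun ⟨u, huP, huV, hdom⟩ => hno ⟨u, huP, ⟨r, huV⟩, ?_⟩⟩
      exact Relation.ReflTransGen.mono (fun a b hab => Set.mem_iUnion.2 ⟨r, hab⟩) _ _ hdom
    · rintro ⟨r, hv, hno⟩
      refine ⟨⟨r, hv⟩, fun ⟨u, huP, ⟨s, huV⟩, hdom⟩ => ?_⟩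
      obtain ⟨hvs, hpath⟩ := reach_stay hA hdisj huV hdom
      have hsr : s = r := by
        by_contra hne
        exact Set.disjoint_left.1 (hdisj hne) hvs hv
      subst hsr
      exact hno ⟨u, huP, huV, hpath⟩
  rw [key]
  exact ncard_iUnion_fin _ (fun r s hrs => Set.disjoint_left.2 fun a ha hb =>
    Set.disjoint_left.1 (hdisj hrs) ha.1 hb.1)

lemma dissat_mono {α : Type*} [Fintype α] (Vi : Set α) (A : Set (α × α)) {P Q : Set α}
    (h : P ⊆ Q) : dissat Vi A Q ≤ dissat Vi A P := by
  apply Set.ncard_le_ncard _ (Set.toFinite _)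
  rintro v ⟨hv, hno⟩
  exact ⟨hv, fun ⟨u, huP, rest⟩ => hno ⟨u, h huP, rest⟩⟩

lemma dissat_inter {α : Type*} (Vi : Set α) (A : Set (α × α)) (P : Set α) :
    dissat Vi A (P ∩ Vi) = dissat Vi A P := by
  unfold dissat
  congr 1
  ext v
  constructor
  · rintro ⟨hv, hno⟩
    exact ⟨hv, fun ⟨u, h1, h2, h3⟩ => hno ⟨u, ⟨h1, h2⟩, h2, h3⟩⟩
  · rintro ⟨hv, hno⟩
    exact ⟨hv, fun ⟨u, ⟨h1, h2⟩, _, h3⟩ => hno ⟨u, h1, h2, h3⟩⟩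

theorem stmt11 {α ι : Type*} [Fintype α] [Fintype ι] (k : ι → ℕ)
    (Vir : (i : ι) → Fin (k i) → Set α) (Air : (i : ι) → Fin (k i) → Set (α × α))
    (hpath : ∀ i r, IsDirPath (Vir i r) (Air i r))
    (hdisj : ∀ i, Pairwise fun r s => Disjoint (Vir i r) (Vir i s)) :
    sInf {d : ℕ | ∃ π : ι → Set α, IsAllocation π ∧
        d = ∑ i, dissat (⋃ r, Vir i r) (⋃ r, Air i r) (π i)} =
    sInf {d : ℕ | ∃ π : (Σ i, Fin (k i)) → Set α, IsAllocation π ∧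
        d = ∑ p : Σ i, Fin (k i), dissat (Vir p.1 p.2) (Air p.1 p.2) (π p)} := by
  have hAsub : ∀ i s, Air i s ⊆ Vir i s ×ˢ Vir i s := fun i s => dirpath_sub (hpath i s)
  apply le_antisymm
  · -- LHS ≤ RHS
    have hne : ({d : ℕ | ∃ π : (Σ i, Fin (k i)) → Set α, IsAllocation π ∧
        d = ∑ p : Σ i, Fin (k i), dissat (Vir p.1 p.2) (Air p.1 p.2) (π p)}).Nonempty :=
      ⟨∑ p : Σ i, Fin (k i), dissat (Vir p.1 p.2) (Air p.1 p.2) (∅ : Set α),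
        fun _ => ∅, fun _ _ _ => by simp, rfl⟩
    apply le_csInf hne
    rintro d ⟨π', hπ', rfl⟩
    set π : ι → Set α := fun i => ⋃ r, π' ⟨i, r⟩ with hπdef
    have hπ : IsAllocation π := by
      intro i j hij
      simp only [hπdef, Set.disjoint_iUnion_left, Set.disjoint_iUnion_right]
      intro s r
      exact hπ' (by simp [hij] : (⟨i, r⟩ : Σ i, Fin (k i)) ≠ ⟨j, s⟩)
    have hmem : (∑ i, dissat (⋃ r, Vir i r) (⋃ r, Air i r) (π i)) ∈
        {d : ℕ | ∃ π : ι → Set α, IsAllocation π ∧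
          d = ∑ i, dissat (⋃ r, Vir i r) (⋃ r, Air i r) (π i)} := ⟨π, hπ, rfl⟩
    apply le_trans (Nat.sInf_le hmem)
    rw [← Finset.univ_sigma_univ, Finset.sum_sigma]
    apply Finset.sum_le_sum
    intro i _
    rw [dissat_decomp _ _ (hAsub i) (hdisj i)]
    apply Finset.sum_le_sum
    intro r _
    exact dissat_mono _ _ (Set.subset_iUnion (fun r => π' ⟨i, r⟩) r)
  · -- RHS ≤ LHS
    have hne : ({d : ℕ | ∃ π : ι → Set α, IsAllocation π ∧
        d = ∑ i, dissat (⋃ r, Vir i r) (⋃ r, Air i r) (π i)}).Nonempty :=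
      ⟨∑ i, dissat (⋃ r, Vir i r) (⋃ r, Air i r) (∅ : Set α),
        fun _ => ∅, fun _ _ _ => by simp, rfl⟩
    apply le_csInf hne
    rintro d ⟨π, hπ, rfl⟩
    set π' : (Σ i, Fin (k i)) → Set α := fun p => π p.1 ∩ Vir p.1 p.2 with hπ'def
    have hπ' : IsAllocation π' := by
      rintro ⟨i, r⟩ ⟨j, s⟩ hne
      by_cases hij : i = j
      · subst hij
        have hrs : r ≠ s := fun h => hne (by rw [h])
        exact Set.disjoint_left.2 fun a ha hb =>
          Set.disjoint_left.1 (hdisj i hrs) ha.2 hb.2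
      · exact Set.disjoint_left.2 fun a ha hb =>
          Set.disjoint_left.1 (hπ hij) ha.1 hb.1
    have hmem : (∑ p : Σ i, Fin (k i), dissat (Vir p.1 p.2) (Air p.1 p.2) (π' p)) ∈
        {d : ℕ | ∃ π : (Σ i, Fin (k i)) → Set α, IsAllocation π ∧
          d = ∑ p : Σ i, Fin (k i), dissat (Vir p.1 p.2) (Air p.1 p.2) (π p)} := ⟨π', hπ', rfl⟩
    apply le_trans (Nat.sInf_le hmem)
    apply le_of_eq
    rw [← Finset.univ_sigma_univ, Finset.sum_sigma]
    apply Finset.sum_congr rfl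
    intro i _
    rw [dissat_decomp _ _ (hAsub i) (hdisj i)]
    exact Finset.sum_congr rfl fun r _ => dissat_inter (Vir i r) (Air i r) (π i)
end

section
/- Let (X, C) be an instance of 3X3C with |X| = 3q and C = {C_1, …, C_p}, p = 3q, and let ℓ = (2/3)p + 1. Consider the allocation instance with items V = X ∪ {1, …, p} ∪ {h_1, …, h_{ℓ+1}} and agents D_1, …, D_{ℓ+1}, A, C_1, …, C_p whose preference graphs are out-stars: each D_r has root h_1 with arcs (h_1, h_s) for 2 ≤ s ≤ ℓ+1; agent A has root h_1 with arcs (h_1, j) for 1 ≤ j ≤ p; and each agent C_j has root j with arcs (j, a) for each a ∈ C_j and arcs (j, h_r) for 1 ≤ r ≤ ℓ−1. Then C contains an exact cover of X if and only if there exists an allocation π with δ_π(i) ≤ ℓ for every agent i. -/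
/-- Items of the reduction: the elements of `X`, one item `j` per set `C_j`
(indexed by `Fin (3q)`), and the items `h_1, …, h_{ℓ+1}` (indexed by `Fin (2q+2)`,
with `h_t` corresponding to index `t - 1`), where `ℓ = (2/3)p + 1 = 2q + 1`. -/
abbrev S12Itm (q : ℕ) (X : Type*) : Type _ := X ⊕ Fin (3*q) ⊕ Fin (2*q+2)

/-- Agents of the reduction: `D_1, …, D_{ℓ+1}`, agent `A`, and `C_1, …, C_p`. -/
abbrev S12Agt (q : ℕ) : Type := Fin (2*q+2) ⊕ Unit ⊕ Fin (3*q)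

instance (q : ℕ) : NeZero (2*q+2) := ⟨by omega⟩

/-- Vertex sets of the preference out-stars. -/
def s12Vi (q : ℕ) {X : Type*} (C : Fin (3*q) → Finset X) :
    S12Agt q → Set (S12Itm q X)
  | .inl _ => {v | ∃ r : Fin (2*q+2), v = .inr (.inr r)}
  | .inr (.inl _) => {v | v = .inr (.inr 0) ∨ ∃ j : Fin (3*q), v = .inr (.inl j)}
  | .inr (.inr j) => {v | v = .inr (.inl j) ∨ (∃ x ∈ C j, v = .inl x) ∨
      ∃ r : Fin (2*q+2), (r : ℕ) < 2*q ∧ v = .inr (.inr r)}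

/-- Arc sets of the preference out-stars. -/
def s12A (q : ℕ) {X : Type*} (C : Fin (3*q) → Finset X) :
    S12Agt q → Set (S12Itm q X × S12Itm q X)
  | .inl _ => {p | ∃ s : Fin (2*q+2), s ≠ 0 ∧ p = (.inr (.inr 0), .inr (.inr s))}
  | .inr (.inl _) => {p | ∃ j : Fin (3*q), p = (.inr (.inr 0), .inr (.inl j))}
  | .inr (.inr j) => {p | (∃ x ∈ C j, p = (.inr (.inl j), .inl x)) ∨
      ∃ r : Fin (2*q+2), (r : ℕ) < 2*q ∧ p = (.inr (.inl j), .inr (.inr r))}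

lemma dominates_star {α : Type*} {A : Set (α × α)} {r : α}
    (h1 : ∀ p ∈ A, p.1 = r) (h2 : ∀ p ∈ A, p.2 ≠ r) (u v : α) :
    Dominates A u v ↔ u = v ∨ (u, v) ∈ A := by
  constructor
  · intro h
    rcases Relation.ReflTransGen.cases_head h with h | ⟨c, hc, hcv⟩
    · exact Or.inl h
    · rcases Relation.ReflTransGen.cases_head hcv with h' | ⟨d, hd, _⟩
      · exact Or.inr (h' ▸ hc)
      · exact absurd (h1 _ hd) (h2 _ hc)
  · rintro (rfl | h)
    · exact Relation.ReflTransGen.refl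
    · exact Relation.ReflTransGen.single h

lemma s12_dom (q : ℕ) {X : Type*} (C : Fin (3*q) → Finset X) (a : S12Agt q)
    (u v : S12Itm q X) :
    Dominates (s12A q C a) u v ↔ u = v ∨ (u, v) ∈ s12A q C a := by
  obtain (r | u' | j) := a
  · exact dominates_star (r := .inr (.inr 0))
      (by rintro p ⟨s, hs, rfl⟩; rfl)
      (by rintro p ⟨s, hs, rfl⟩ h; exact hs (by simpa using h)) u v
  · exact dominates_star (r := .inr (.inr 0))
      (by rintro p ⟨j, rfl⟩; rfl)
      (by rintro p ⟨j, rfl⟩ h; simp at h) u v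
  · exact dominates_star (r := .inr (.inl j))
      (by rintro p (⟨x, hx, rfl⟩ | ⟨r, hr, rfl⟩) <;> rfl)
      (by rintro p (⟨x, hx, rfl⟩ | ⟨r, hr, rfl⟩) h <;> simp at h) u v

lemma inj_hh (q : ℕ) {X : Type*} :
    Function.Injective (fun r : Fin (2*q+2) => (Sum.inr (Sum.inr r) : S12Itm q X)) := by
  intro a b h; simpa using h

lemma inj_jj (q : ℕ) {X : Type*} :
    Function.Injective (fun j : Fin (3*q) => (Sum.inr (Sum.inl j) : S12Itm q X)) := by
  intro a b h; simpa using h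

lemma ncard_range_h (q : ℕ) (X : Type*) [Fintype X] :
    (Set.range (fun r : Fin (2*q+2) => (Sum.inr (Sum.inr r) : S12Itm q X))).ncard = 2*q+2 := by
  rw [← Set.image_univ, Set.ncard_image_of_injective _ (inj_hh q), Set.ncard_univ,
    Nat.card_eq_fintype_card, Fintype.card_fin]

lemma ncard_lt2q (q : ℕ) : ({r : Fin (2*q+2) | (r : ℕ) < 2*q}).ncard = 2*q := by
  have h : {r : Fin (2*q+2) | (r : ℕ) < 2*q}
      = Set.range (Fin.castLE (by omega : 2*q ≤ 2*q+2)) := by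
    ext r
    constructor
    · intro hr; exact ⟨⟨r, hr⟩, Fin.ext rfl⟩
    · rintro ⟨i, rfl⟩; simpa using i.isLt
  rw [h, ← Set.image_univ, Set.ncard_image_of_injective _ (Fin.castLE_injective _),
    Set.ncard_univ, Nat.card_eq_fintype_card, Fintype.card_fin]

lemma ncard_ne (n : ℕ) [NeZero n] (r : Fin n) : ({s : Fin n | s ≠ r}).ncard = n - 1 := by
  have h1 : ({s : Fin n | s ≠ r}) = ({r} : Set (Fin n))ᶜ := by ext s; simp
  have h2 := Set.ncard_add_ncard_compl ({r} : Set (Fin n))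
  rw [Set.ncard_singleton, Nat.card_eq_fintype_card, Fintype.card_fin] at h2
  rw [h1]; omega
-- AUX END

open Classical in
noncomputable def fwdAlloc (q : ℕ) {X : Type*} (C : Fin (3*q) → Finset X)
    (S : Set (Fin (3*q))) : S12Agt q → Set (S12Itm q X)
  | .inl r => {.inr (.inr r)}
  | .inr (.inl _) => {v | ∃ j ∈ S, v = .inr (.inl j)}
  | .inr (.inr j) => if j ∈ S then {v | ∃ x ∈ C j, v = .inl x} else {.inr (.inl j)}

open Classical in
noncomputable def fwdOwn (q : ℕ) {X : Type*} (S : Set (Fin (3*q))) (sel : X → Fin (3*q)) :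
    S12Itm q X → S12Agt q
  | .inl x => .inr (.inr (sel x))
  | .inr (.inl j) => if j ∈ S then .inr (.inl ()) else .inr (.inr j)
  | .inr (.inr r) => .inl r

lemma fwd_isalloc (q : ℕ) {X : Type*} (C : Fin (3*q) → Finset X) (S : Set (Fin (3*q)))
    (hS : ∀ x : X, ∃! j, j ∈ S ∧ x ∈ C j) : IsAllocation (fwdAlloc q C S) := by
  classical
  choose sel hsel using fun x => (hS x).exists
  have huniq : ∀ x j, j ∈ S → x ∈ C j → j = sel x := fun x j h1 h2 =>
    (hS x).unique ⟨h1, h2⟩ ⟨(hsel x).1, (hsel x).2⟩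
  have key : ∀ a v, v ∈ fwdAlloc q C S a → fwdOwn q S sel v = a := by
    rintro (r | u' | j) v hv
    · obtain rfl : v = .inr (.inr r) := hv
      rfl
    · obtain ⟨j, hj, rfl⟩ := hv
      simp [fwdOwn, if_pos hj]
    · by_cases hj : j ∈ S
      · rw [show fwdAlloc q C S (.inr (.inr j)) = if j ∈ S then {v | ∃ x ∈ C j, v = .inl x}
          else {.inr (.inl j)} from rfl, if_pos hj] at hv
        obtain ⟨x, hx, rfl⟩ := hv
        simp [fwdOwn, (huniq x j hj hx).symm]
      · rw [show fwdAlloc q C S (.inr (.inr j)) = if j ∈ S then {v | ∃ x ∈ C j, v = .inl x}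
          else {.inr (.inl j)} from rfl, if_neg hj] at hv
        obtain rfl : v = .inr (.inl j) := hv
        simp [fwdOwn, if_neg hj]
  intro a b hab
  rw [Set.disjoint_left]
  intro v hva hvb
  exact hab ((key a v hva).symm.trans (key b v hvb))

lemma cover_ncard {X : Type*} [Fintype X] [DecidableEq X] (q : ℕ)
    (hX : Fintype.card X = 3*q) (C : Fin (3*q) → Finset X) (hC3 : ∀ j, (C j).card = 3)
    (S : Set (Fin (3*q))) (hS : ∀ x : X, ∃! j, j ∈ S ∧ x ∈ C j) : S.ncard = q := by
  classical
  have hdisj : ∀ j ∈ S.toFinset, ∀ j' ∈ S.toFinset, j ≠ j' → Disjoint (C j) (C j') := by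
    intro j hj j' hj' hne
    rw [Finset.disjoint_left]
    intro x hx hx'
    exact hne ((hS x).unique ⟨Set.mem_toFinset.mp hj, hx⟩ ⟨Set.mem_toFinset.mp hj', hx'⟩)
  have hU : S.toFinset.biUnion C = Finset.univ := by
    refine Finset.eq_univ_iff_forall.mpr fun x => ?_
    obtain ⟨j, ⟨hj, hx⟩, -⟩ := hS x
    exact Finset.mem_biUnion.mpr ⟨j, Set.mem_toFinset.mpr hj, hx⟩
  have h1 := Finset.card_biUnion hdisj
  rw [hU, Finset.card_univ, hX, Finset.sum_congr rfl (fun j _ => hC3 j),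
    Finset.sum_const, smul_eq_mul] at h1
  rw [Set.ncard_eq_toFinset_card']
  omega

lemma fwd_dissat {X : Type*} [Fintype X] [DecidableEq X] (q : ℕ)
    (hX : Fintype.card X = 3*q) (C : Fin (3*q) → Finset X) (hC3 : ∀ j, (C j).card = 3)
    (S : Set (Fin (3*q))) (hS : ∀ x : X, ∃! j, j ∈ S ∧ x ∈ C j) (a : S12Agt q) :
    dissat (s12Vi q C a) (s12A q C a) (fwdAlloc q C S a) ≤ 2*q+1 := by
  classical
  have hSq : S.ncard = q := cover_ncard q hX C hC3 S hS
  have hScompl : Sᶜ.ncard = 2*q := by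
    have h := Set.ncard_add_ncard_compl S
    rw [hSq, Nat.card_eq_fintype_card, Fintype.card_fin] at h
    omega
  unfold dissat
  obtain (r | u' | j) := a
  · -- agent D_r
    refine le_trans (Set.ncard_le_ncard
      (t := (fun s : Fin (2*q+2) => (Sum.inr (Sum.inr s) : S12Itm q X)) '' {s | s ≠ r})
      ?_ (Set.toFinite _)) ?_
    · rintro v ⟨⟨s, rfl⟩, hnc⟩
      refine ⟨s, ?_, rfl⟩
      rintro rfl
      exact hnc ⟨.inr (.inr s), rfl, ⟨s, rfl⟩, Relation.ReflTransGen.refl⟩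
    · rw [Set.ncard_image_of_injective _ (inj_hh q), ncard_ne]
      omega
  · -- agent A
    refine le_trans (Set.ncard_le_ncard
      (t := insert (Sum.inr (Sum.inr 0) : S12Itm q X)
        ((fun j : Fin (3*q) => (Sum.inr (Sum.inl j) : S12Itm q X)) '' Sᶜ))
      ?_ (Set.toFinite _)) ?_
    · rintro v ⟨(rfl | ⟨j, rfl⟩), hnc⟩
      · exact Set.mem_insert _ _
      · by_cases hj : j ∈ S
        · exact absurd ⟨.inr (.inl j), ⟨j, hj, rfl⟩, Or.inr ⟨j, rfl⟩,
            Relation.ReflTransGen.refl⟩ hnc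
        · exact Set.mem_insert_of_mem _ ⟨j, hj, rfl⟩
    · refine le_trans (Set.ncard_insert_le _ _) ?_
      rw [Set.ncard_image_of_injective _ (inj_jj q), hScompl]
  · -- agent C_j
    by_cases hj : j ∈ S
    · refine le_trans (Set.ncard_le_ncard
        (t := insert (Sum.inr (Sum.inl j) : S12Itm q X)
          ((fun r : Fin (2*q+2) => (Sum.inr (Sum.inr r) : S12Itm q X)) '' {r | (r : ℕ) < 2*q}))
        ?_ (Set.toFinite _)) ?_
      · rintro v ⟨(rfl | ⟨x, hx, rfl⟩ | ⟨r, hr, rfl⟩), hnc⟩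
        · exact Set.mem_insert _ _
        · refine absurd ⟨.inl x, ?_, Or.inr (Or.inl ⟨x, hx, rfl⟩),
            Relation.ReflTransGen.refl⟩ hnc
          rw [show fwdAlloc q C S (.inr (.inr j)) = if j ∈ S then {v | ∃ x ∈ C j, v = .inl x}
            else {.inr (.inl j)} from rfl, if_pos hj]
          exact ⟨x, hx, rfl⟩
        · exact Set.mem_insert_of_mem _ ⟨r, hr, rfl⟩
      · refine le_trans (Set.ncard_insert_le _ _) ?_
        rw [Set.ncard_image_of_injective _ (inj_hh q), ncard_lt2q]
    · refine le_trans (Set.ncard_le_ncard (t := (∅ : Set (S12Itm q X)))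
        ?_ (Set.toFinite _)) (by simp)
      rintro v ⟨hv, hnc⟩
      refine absurd ⟨.inr (.inl j), ?_, Or.inl rfl, ?_⟩ hnc
      · rw [show fwdAlloc q C S (.inr (.inr j)) = if j ∈ S then {v | ∃ x ∈ C j, v = .inl x}
          else {.inr (.inl j)} from rfl, if_neg hj]
        rfl
      · rcases hv with rfl | ⟨x, hx, rfl⟩ | ⟨r, hr, rfl⟩
        · exact Relation.ReflTransGen.refl
        · exact Relation.ReflTransGen.single (Or.inl ⟨x, hx, rfl⟩)
        · exact Relation.ReflTransGen.single (Or.inr ⟨r, hr, rfl⟩)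

lemma bwd {X : Type*} [Fintype X] [DecidableEq X] (q : ℕ)
    (hX : Fintype.card X = 3*q) (C : Fin (3*q) → Finset X) (hC3 : ∀ j, (C j).card = 3)
    (π : S12Agt q → Set (S12Itm q X)) (hal : IsAllocation π)
    (hdis : ∀ a, dissat (s12Vi q C a) (s12A q C a) (π a) ≤ 2*q + 1) :
    ∃ S : Set (Fin (3*q)), ∀ x : X, ∃! j, j ∈ S ∧ x ∈ C j := by
  classical
  -- Step 1: each D_r receives some h-item
  have hD : ∀ r : Fin (2*q+2), ∃ s : Fin (2*q+2),
      (Sum.inr (Sum.inr s) : S12Itm q X) ∈ π (.inl r) := by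
    intro r
    by_contra hno
    push_neg at hno
    have hsub : s12Vi q C (.inl r) ⊆ {v | v ∈ s12Vi q C (.inl r) ∧
        ¬ ∃ u, u ∈ π (.inl r) ∧ u ∈ s12Vi q C (.inl r) ∧
          Dominates (s12A q C (.inl r)) u v} := by
      intro v hv
      refine ⟨hv, ?_⟩
      rintro ⟨u, hu, ⟨s, rfl⟩, -⟩
      exact hno s hu
    have h2 := le_trans (Set.ncard_le_ncard hsub (Set.toFinite _)) (hdis (.inl r))
    have h3 : (s12Vi q C (.inl r) : Set (S12Itm q X)).ncard = 2*q+2 := by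
      rw [show s12Vi q C (.inl r)
          = Set.range (fun s : Fin (2*q+2) => (Sum.inr (Sum.inr s) : S12Itm q X)) by
        ext v; exact ⟨fun ⟨s, hs⟩ => ⟨s, hs.symm⟩, fun ⟨s, hs⟩ => ⟨s, hs.symm⟩⟩]
      exact ncard_range_h q X
    omega
  choose f hf using hD
  have hfinj : Function.Injective f := by
    intro r r' h
    by_contra hne
    have hd := hal (show (Sum.inl r : S12Agt q) ≠ .inl r' by simpa using hne)
    exact Set.disjoint_left.mp hd (hf r) (by rw [h]; exact hf r')
  have hfsurj : Function.Surjective f := Finite.injective_iff_surjective.mp hfinj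
  have honly : ∀ (s : Fin (2*q+2)) (b : Unit ⊕ Fin (3*q)),
      (Sum.inr (Sum.inr s) : S12Itm q X) ∉ π (.inr b) := by
    intro s b hmem
    obtain ⟨r, rfl⟩ := hfsurj s
    exact Set.disjoint_left.mp
      (hal (show (Sum.inl r : S12Agt q) ≠ .inr b by simp)) (hf r) hmem
  -- T : set of j-items received by agent A
  set T : Set (Fin (3*q)) :=
    {j | (Sum.inr (Sum.inl j) : S12Itm q X) ∈ π (.inr (.inl ()))} with hTdef
  -- Step 3: T has at least q elements
  have hTc : q ≤ T.ncard := by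
    have hsub : insert (Sum.inr (Sum.inr 0) : S12Itm q X)
        ((fun j : Fin (3*q) => (Sum.inr (Sum.inl j) : S12Itm q X)) '' Tᶜ)
        ⊆ {v | v ∈ s12Vi q C (.inr (.inl ())) ∧
          ¬ ∃ u, u ∈ π (.inr (.inl ())) ∧ u ∈ s12Vi q C (.inr (.inl ())) ∧
            Dominates (s12A q C (.inr (.inl ()))) u v} := by
      rintro v (rfl | ⟨j, hj, rfl⟩)
      · refine ⟨Or.inl rfl, ?_⟩
        rintro ⟨u, hu, hVi, hdom⟩
        rcases hVi with rfl | ⟨j', rfl⟩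
        · exact honly 0 (.inl ()) hu
        · rcases (s12_dom q C (.inr (.inl ())) _ _).mp hdom with h | ⟨j'', h⟩ <;> simp at h
      · refine ⟨Or.inr ⟨j, rfl⟩, ?_⟩
        rintro ⟨u, hu, hVi, hdom⟩
        rcases hVi with rfl | ⟨j', rfl⟩
        · exact honly 0 (.inl ()) hu
        · rcases (s12_dom q C (.inr (.inl ())) _ _).mp hdom with h | ⟨j'', h⟩
          · obtain rfl : j' = j := by simpa using h
            exact hj hu
          · simp at h
    have h2 := le_trans (Set.ncard_le_ncard hsub (Set.toFinite _)) (hdis (.inr (.inl ())))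
    have hins : (insert (Sum.inr (Sum.inr 0) : S12Itm q X)
        ((fun j : Fin (3*q) => (Sum.inr (Sum.inl j) : S12Itm q X)) '' Tᶜ)).ncard
        = Tᶜ.ncard + 1 := by
      rw [Set.ncard_insert_of_notMem (by rintro ⟨j, hj, h⟩; simp at h) (Set.toFinite _),
        Set.ncard_image_of_injective _ (inj_jj q)]
    have hcompl := Set.ncard_add_ncard_compl T
    rw [Nat.card_eq_fintype_card, Fintype.card_fin] at hcompl
    omega
  -- Step 4: for j ∈ T, agent C_j receives all elements of C j
  have hfill : ∀ j ∈ T, ∀ x ∈ C j, (Sum.inl x : S12Itm q X) ∈ π (.inr (.inr j)) := by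
    intro j hj x hx
    by_contra hno
    have hcov : ∀ v : S12Itm q X,
        (∃ u, u ∈ π (.inr (.inr j)) ∧ u ∈ s12Vi q C (.inr (.inr j)) ∧
          Dominates (s12A q C (.inr (.inr j))) u v) →
        ∃ y ∈ C j, v = .inl y ∧ (Sum.inl y : S12Itm q X) ∈ π (.inr (.inr j)) := by
      rintro v ⟨u, hu, hVi, hdom⟩
      rcases hVi with rfl | ⟨y, hy, rfl⟩ | ⟨r, hr, rfl⟩
      · exact absurd hu (Set.disjoint_left.mp
          (hal (show (Sum.inr (Sum.inl ()) : S12Agt q) ≠ .inr (.inr j) by simp)) hj)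
      · rcases (s12_dom q C (.inr (.inr j)) _ _).mp hdom with rfl | harc
        · exact ⟨y, hy, rfl, hu⟩
        · rcases harc with ⟨x', hx', h⟩ | ⟨r, hr, h⟩ <;> simp at h
      · exact absurd hu (honly r (.inr j))
    have hsub : insert (Sum.inl x : S12Itm q X) (insert (Sum.inr (Sum.inl j))
        ((fun r : Fin (2*q+2) => (Sum.inr (Sum.inr r) : S12Itm q X)) '' {r | (r : ℕ) < 2*q}))
        ⊆ {v | v ∈ s12Vi q C (.inr (.inr j)) ∧
          ¬ ∃ u, u ∈ π (.inr (.inr j)) ∧ u ∈ s12Vi q C (.inr (.inr j)) ∧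
            Dominates (s12A q C (.inr (.inr j))) u v} := by
      rintro v (rfl | rfl | ⟨r, hr, rfl⟩)
      · refine ⟨Or.inr (Or.inl ⟨x, hx, rfl⟩), fun hex => ?_⟩
        obtain ⟨y, hy, heq, hmem⟩ := hcov _ hex
        obtain rfl : x = y := by simpa using heq
        exact hno hmem
      · refine ⟨Or.inl rfl, fun hex => ?_⟩
        obtain ⟨y, hy, heq, -⟩ := hcov _ hex
        simp at heq
      · refine ⟨Or.inr (Or.inr ⟨r, hr, rfl⟩), fun hex => ?_⟩
        obtain ⟨y, hy, heq, -⟩ := hcov _ hex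
        simp at heq
    have h2 := le_trans (Set.ncard_le_ncard hsub (Set.toFinite _)) (hdis (.inr (.inr j)))
    have hB : (insert (Sum.inl x : S12Itm q X) (insert (Sum.inr (Sum.inl j))
        ((fun r : Fin (2*q+2) => (Sum.inr (Sum.inr r) : S12Itm q X))
          '' {r | (r : ℕ) < 2*q}))).ncard = 2*q+2 := by
      rw [Set.ncard_insert_of_notMem
          (by rintro (h | ⟨r, hr, h⟩) <;> simp at h) (Set.toFinite _),
        Set.ncard_insert_of_notMem (by rintro ⟨r, hr, h⟩; simp at h) (Set.toFinite _),
        Set.ncard_image_of_injective _ (inj_hh q), ncard_lt2q]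
    omega
  -- Step 5/6: T yields an exact cover
  have hdisj : ∀ j ∈ T, ∀ j' ∈ T, j ≠ j' → Disjoint (C j) (C j') := by
    intro j hj j' hj' hne
    rw [Finset.disjoint_left]
    intro x hx hx'
    exact Set.disjoint_left.mp
      (hal (show (Sum.inr (Sum.inr j) : S12Agt q) ≠ .inr (.inr j') by simp [hne]))
      (hfill j hj x hx) (hfill j' hj' x hx')
  have hU : T.toFinset.biUnion C = Finset.univ := by
    have hcard : (T.toFinset.biUnion C).card = 3 * T.toFinset.card := by
      rw [Finset.card_biUnion (fun j hj j' hj' hne =>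
        hdisj j (Set.mem_toFinset.mp hj) j' (Set.mem_toFinset.mp hj') hne),
        Finset.sum_congr rfl (fun j _ => hC3 j), Finset.sum_const, smul_eq_mul, mul_comm]
    apply Finset.eq_univ_of_card
    have hle := Finset.card_le_univ (T.toFinset.biUnion C)
    rw [hX] at hle
    rw [hX]
    have hTT : T.toFinset.card = T.ncard := (Set.ncard_eq_toFinset_card' T).symm
    omega
  refine ⟨T, fun x => ?_⟩
  obtain ⟨j, hj, hx⟩ := Finset.mem_biUnion.mp (hU ▸ Finset.mem_univ x)
  refine ⟨j, ⟨Set.mem_toFinset.mp hj, hx⟩, ?_⟩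
  rintro j' ⟨hj', hx'⟩
  by_contra hne
  exact Finset.disjoint_left.mp
    (hdisj j' hj' j (Set.mem_toFinset.mp hj) hne) hx' hx

theorem stmt12 {X : Type*} [Fintype X] [DecidableEq X] (q : ℕ)
    (hX : Fintype.card X = 3*q)
    (C : Fin (3*q) → Finset X) (hC3 : ∀ j, (C j).card = 3)
    (hocc : ∀ x : X, (Finset.univ.filter fun j => x ∈ C j).card = 3) :
    (∃ S : Set (Fin (3*q)), ∀ x : X, ∃! j, j ∈ S ∧ x ∈ C j) ↔
    (∃ π : S12Agt q → Set (S12Itm q X), IsAllocation π ∧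
      ∀ a, dissat (s12Vi q C a) (s12A q C a) (π a) ≤ 2*q + 1) := by
  constructor
  · rintro ⟨S, hS⟩
    exact ⟨fwdAlloc q C S, fwd_isalloc q C S hS, fwd_dissat q hX C hC3 S hS⟩
  · rintro ⟨π, hal, hdis⟩
    exact bwd q hX C hC3 π hal hdis
end
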